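/- arXiv:2405.05291 — 4 statements merged into one kernel-verified Lean document; each statement's English description precedes it below -/
import Mathlib

section
/- For every n ∈ ℕ, the map ‖·‖*ₙ is a norm on Xⁿ with ‖x‖*₁ = ‖x‖ for x ∈ X, and the sequence (‖·‖*ₙ : n ∈ ℕ) satisfies the multi-norm axioms: (A1) ‖(x_{σ(1)},…,x_{σ(n)})‖*ₙ = ‖(x₁,…,xₙ)‖*ₙ for every permutation σ of {1,…,n}; (A2) ‖(α₁x₁,…,αₙxₙ)‖*ₙ ≤ (max₁≤i≤n |αᵢ|)·‖(x₁,…,xₙ)‖*ₙ for all α₁,…,αₙ ∈ ℂ; (A3) ‖(x₁,…,x_{n-1},0)‖*ₙ = ‖(x₁,…,x_{n-1})‖*_{n-1}; (A4) ‖(x₁,…,xₙ,xₙ)‖*_{n+1} ≤ ‖(x₁,…,xₙ)‖*ₙ. -/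
open scoped RightActions

/-- The Hilbert C⋆-module class as it stood in Mathlib (December 2024): a right `A`-module
(action of `Aᵐᵒᵖ`) with an `A`-valued inner product. -/
class RightCStarModule (A : outParam <| Type*) (E : Type*) [NonUnitalSemiring A] [StarRing A]
    [Module ℂ A] [AddCommGroup E] [Module ℂ E] [PartialOrder A] [SMul Aᵐᵒᵖ E] [Norm A] [Norm E]
    extends Inner A E where
  inner_add_right {x} {y} {z} : inner x (y + z) = inner x y + inner x z
  inner_self_nonneg {x} : 0 ≤ inner x x
  inner_self {x} : inner x x = 0 ↔ x = 0
  inner_op_smul_right {a : A} {x y : E} : inner x (y <• a) = inner x y * a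
  inner_smul_right_complex {z : ℂ} {x} {y} : inner x (z • y) = z • inner x y
  star_inner x y : star (inner x y) = inner y x
  norm_eq_sqrt_norm_inner_self x : ‖x‖ = √‖inner x x‖

variable (A : Type*) {E : Type*} [NonUnitalCStarAlgebra A] [PartialOrder A] [StarOrderedRing A]
  [NormedAddCommGroup E] [Module ℂ E] [SMul Aᵐᵒᵖ E] [RightCStarModule A E]

/-- `μ*ₙ(y₁,…,yₙ) = sup { ‖(Σᵢ |⟨yᵢ,z⟩|²)^{1/2}‖ : z ∈ X, ‖z‖ ≤ 1 }`
(note `‖a^{1/2}‖ = √‖a‖` for `a ≥ 0`). -/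
noncomputable def mustar (n : ℕ) (y : Fin n → E) : ℝ :=
  sSup {r : ℝ | ∃ z : E, ‖z‖ ≤ 1 ∧
    r = Real.sqrt ‖∑ i, star (inner A (y i) z : A) * (inner A (y i) z : A)‖}

/-- `‖x‖*ₙ = sup { ‖Σᵢ |⟨yᵢ,xᵢ⟩|²‖^{1/2} : y₁,…,yₙ ∈ X, μ*ₙ(y₁,…,yₙ) ≤ 1 }`. -/
noncomputable def starNorm (n : ℕ) (x : Fin n → E) : ℝ :=
  sSup {r : ℝ | ∃ y : Fin n → E, mustar A n y ≤ 1 ∧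
    r = Real.sqrt ‖∑ i, star (inner A (y i) (x i) : A) * (inner A (y i) (x i) : A)‖}

namespace RightCStarModule

variable {A}

attribute [simp] RightCStarModule.inner_add_right RightCStarModule.star_inner
attribute [simp] RightCStarModule.inner_op_smul_right RightCStarModule.inner_smul_right_complex

@[simp]
lemma inner_add_left {x y z : E} : inner A (x + y) z = inner A x z + inner A y z := by
  rw [← star_inner z (x + y), inner_add_right, star_add, star_inner, star_inner]

@[simp]
lemma inner_op_smul_left {a : A} {x y : E} : inner A (x <• a) y = star a * inner A x y := by
  rw [← star_inner y, inner_op_smul_right, star_mul, star_inner]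

@[simp]
lemma inner_smul_left_complex {z : ℂ} {x y : E} : inner A (z • x) y = star z • inner A x y := by
  rw [← star_inner y, inner_smul_right_complex, star_smul, star_inner]

@[simp]
lemma inner_zero_right {x : E} : inner A x (0 : E) = 0 := by
  have h := inner_add_right (A := A) (x := x) (y := (0 : E)) (z := 0)
  rw [add_zero] at h
  simpa using h

@[simp]
lemma inner_zero_left {x : E} : inner A (0 : E) x = 0 := by
  rw [← star_inner x, inner_zero_right, star_zero]

@[simp]
lemma inner_neg_right {x y : E} : inner A x (-y) = -inner A x y := by
  rw [← neg_one_smul ℂ y, inner_smul_right_complex, neg_one_smul]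

@[simp]
lemma inner_neg_left {x y : E} : inner A (-x) y = -inner A x y := by
  rw [← star_inner y, inner_neg_right, star_neg, star_inner]

lemma norm_sq_eq {x : E} : ‖x‖ ^ 2 = ‖inner A x x‖ := by
  rw [norm_eq_sqrt_norm_inner_self (A := A) x, Real.sq_sqrt (norm_nonneg _)]

include A in
variable (A) in
lemma norm_smul_complex (c : ℂ) (x : E) : ‖c • x‖ = ‖c‖ * ‖x‖ := by
  rw [norm_eq_sqrt_norm_inner_self (A := A) (c • x), norm_eq_sqrt_norm_inner_self (A := A) x,
    inner_smul_left_complex, inner_smul_right_complex, norm_smul, norm_smul, norm_star,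
    ← mul_assoc, Real.sqrt_mul (by positivity), Real.sqrt_mul_self (norm_nonneg _)]

lemma inner_mul_inner_swap_le {x y : E} :
    inner A y x * inner A x y ≤ ‖x‖ ^ 2 • inner A y y := by
  rcases eq_or_ne x 0 with rfl | h
  · simp
  set r : ℝ := ‖x‖ ^ 2 with hr
  have hr0 : 0 < r := by have := norm_pos_iff.mpr h; positivity
  set a : A := inner A x y with ha
  have hstar : inner A y x = star a := (star_inner x y).symm
  have h1 : 0 ≤ inner A (x <• a - (r : ℂ) • y) (x <• a - (r : ℂ) • y) := inner_self_nonneg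
  have hexp : inner A (x <• a - (r : ℂ) • y) (x <• a - (r : ℂ) • y)
      = star a * inner A x x * a - (2 * r) • (star a * a) + (r ^ 2) • inner A y y := by
    simp only [sub_eq_add_neg, inner_add_left, inner_add_right, inner_neg_left, inner_neg_right,
      inner_op_smul_left, inner_op_smul_right, inner_smul_left_complex,
      inner_smul_right_complex, hstar, ← ha, Complex.star_def, Complex.conj_ofReal]
    simp only [Complex.coe_smul, add_mul, mul_add, neg_mul, mul_neg, smul_mul_assoc,
      mul_smul_comm, mul_assoc]
    module
  have h2 : star a * inner A x x * a ≤ r • (star a * a) := by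
    have := CStarAlgebra.star_left_conjugate_le_norm_smul (a := a) (b := inner A x x)
      (star_inner x x)
    rwa [← norm_sq_eq] at this
  have h3 : 0 ≤ r • (r • inner A y y - star a * a) := by
    have : r • (r • inner A y y - star a * a) = (star a * inner A x x * a - (2 * r) • (star a * a)
        + r ^ 2 • inner A y y) + (r • (star a * a) - star a * inner A x x * a) := by module
    rw [this]
    exact add_nonneg (hexp ▸ h1) (sub_nonneg.mpr h2)
  rw [hstar]
  have := smul_nonneg (inv_nonneg.mpr hr0.le) h3
  rwa [smul_smul, inv_mul_cancel₀ hr0.ne', one_smul, sub_nonneg] at this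

variable (E) in
lemma norm_inner_le {x y : E} : ‖inner A x y‖ ≤ ‖x‖ * ‖y‖ := by
  have := calc ‖inner A x y‖ ^ 2 = ‖inner A y x * inner A x y‖ := by
                rw [← star_inner x y, CStarRing.norm_star_mul_self, pow_two]
    _ ≤ ‖‖x‖ ^ 2 • inner A y y‖ := by
                refine CStarAlgebra.norm_le_norm_of_nonneg_of_le ?_ inner_mul_inner_swap_le
                rw [← star_inner x y]
                exact star_mul_self_nonneg _
    _ = ‖x‖ ^ 2 * ‖inner A y y‖ := by
                rw [norm_smul, Real.norm_eq_abs, abs_of_nonneg (by positivity)]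
    _ = ‖x‖ ^ 2 * ‖y‖ ^ 2 := by rw [norm_sq_eq (A := A) (x := y)]
    _ = (‖x‖ * ‖y‖) ^ 2 := by rw [mul_pow]
  exact (pow_le_pow_iff_left₀ (norm_nonneg _) (by positivity) (by simp)).mp this

lemma norm_eq_csSup (v : E) :
    ‖v‖ = sSup { ‖inner A w v‖ | (w : E) (_ : ‖w‖ ≤ 1) } := by
  refine Eq.symm <| IsGreatest.csSup_eq ⟨⟨((‖v‖⁻¹ : ℝ) : ℂ) • v, ?_, ?_⟩, ?_⟩
  · rw [norm_smul_complex (A := A), Complex.norm_real, norm_inv, norm_norm]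
    exact inv_mul_le_one_of_le₀ le_rfl (norm_nonneg _)
  · rw [inner_smul_left_complex, norm_smul, norm_star, Complex.norm_real, norm_inv, norm_norm,
      ← norm_sq_eq (A := A)]
    rcases eq_or_ne ‖v‖ 0 with h | h
    · simp [h]
    · field_simp
  · rintro - ⟨w, hw, rfl⟩
    calc _ ≤ ‖w‖ * ‖v‖ := norm_inner_le E
      _ ≤ 1 * ‖v‖ := by gcongr
      _ = ‖v‖ := by simp

end RightCStarModule

namespace StarNormProof

open CStarModule WithCStarModule Finset

/-- The sum `Σᵢ |⟨yᵢ,xᵢ⟩|²`. -/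
noncomputable def SS (n : ℕ) (y x : Fin n → E) : A :=
  ∑ i, star (inner A (y i) (x i) : A) * (inner A (y i) (x i) : A)

variable {n : ℕ}

lemma mustar_def (y : Fin n → E) :
    mustar A n y = sSup {r : ℝ | ∃ z : E, ‖z‖ ≤ 1 ∧ r = Real.sqrt ‖SS A n y (fun _ => z)‖} := rfl

lemma starNorm_def (x : Fin n → E) :
    starNorm A n x
      = sSup {r : ℝ | ∃ y : Fin n → E, mustar A n y ≤ 1 ∧ r = Real.sqrt ‖SS A n y x‖} := rfl

variable {A}

lemma SS_nonneg (y x : Fin n → E) : 0 ≤ SS A n y x :=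
  Finset.sum_nonneg fun i _ => star_mul_self_nonneg _

lemma SS_zero_left (x : Fin n → E) : SS A n (0 : Fin n → E) x = 0 := by
  simp [SS]

lemma norm_le_norm_of_nonneg_of_le {a b : A} (ha : 0 ≤ a) (hab : a ≤ b) : ‖a‖ ≤ ‖b‖ :=
  CStarAlgebra.norm_le_norm_of_nonneg_of_le ha hab

/-- Membership intro for the `mustar` set. -/
lemma sqrt_mem_mustar_set (y : Fin n → E) {z : E} (hz : ‖z‖ ≤ 1) :
    Real.sqrt ‖SS A n y (fun _ => z)‖
      ∈ {r : ℝ | ∃ z : E, ‖z‖ ≤ 1 ∧ r = Real.sqrt ‖SS A n y (fun _ => z)‖} :=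
  ⟨z, hz, rfl⟩

lemma mustar_set_nonempty (y : Fin n → E) :
    {r : ℝ | ∃ z : E, ‖z‖ ≤ 1 ∧ r = Real.sqrt ‖SS A n y (fun _ => z)‖}.Nonempty :=
  ⟨_, sqrt_mem_mustar_set y (z := 0) (by simp)⟩

lemma norm_SS_le (y x : Fin n → E) : ‖SS A n y x‖ ≤ ∑ i, ‖(inner A (y i) (x i) : A)‖ ^ 2 := by
  refine (norm_sum_le _ _).trans ?_
  refine Finset.sum_le_sum fun i _ => ?_
  rw [CStarRing.norm_star_mul_self, sq]

lemma mustar_bddAbove (y : Fin n → E) :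
    BddAbove {r : ℝ | ∃ z : E, ‖z‖ ≤ 1 ∧ r = Real.sqrt ‖SS A n y (fun _ => z)‖} := by
  refine ⟨Real.sqrt (∑ i, ‖y i‖ ^ 2), ?_⟩
  rintro r ⟨z, hz, rfl⟩
  refine Real.sqrt_le_sqrt <| (norm_SS_le _ _).trans <| Finset.sum_le_sum fun i _ => ?_
  have h1 : ‖(inner A (y i) z : A)‖ ≤ ‖y i‖ * ‖z‖ := RightCStarModule.norm_inner_le E
  have h2 : ‖y i‖ * ‖z‖ ≤ ‖y i‖ := by
    calc ‖y i‖ * ‖z‖ ≤ ‖y i‖ * 1 := by gcongr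
    _ = ‖y i‖ := mul_one _
  have := h1.trans h2
  exact pow_le_pow_left₀ (norm_nonneg _) this 2

lemma sqrt_norm_SS_le_mustar (y : Fin n → E) {z : E} (hz : ‖z‖ ≤ 1) :
    Real.sqrt ‖SS A n y (fun _ => z)‖ ≤ mustar A n y := by
  rw [mustar_def]
  exact le_csSup (mustar_bddAbove y) (sqrt_mem_mustar_set y hz)

lemma mustar_nonneg (y : Fin n → E) : 0 ≤ mustar A n y :=
  Real.sqrt_nonneg _ |>.trans (sqrt_norm_SS_le_mustar y (z := 0) (by simp))

lemma mustar_le (y : Fin n → E) {c : ℝ}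
    (h : ∀ z : E, ‖z‖ ≤ 1 → Real.sqrt ‖SS A n y (fun _ => z)‖ ≤ c) : mustar A n y ≤ c := by
  rw [mustar_def]
  exact csSup_le (mustar_set_nonempty y) (by rintro r ⟨z, hz, rfl⟩; exact h z hz)

/-- A single term is dominated by the whole sum (in norm). -/
lemma norm_inner_term_le_SS (y x : Fin n → E) (i : Fin n) :
    ‖(inner A (y i) (x i) : A)‖ ≤ Real.sqrt ‖SS A n y x‖ := by
  have h1 : star (inner A (y i) (x i) : A) * (inner A (y i) (x i) : A) ≤ SS A n y x := by
    refine Finset.single_le_sum (f := fun j => star (inner A (y j) (x j) : A) * (inner A (y j) (x j) : A))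
      (fun j _ => star_mul_self_nonneg _) (Finset.mem_univ i)
  have h2 : ‖star (inner A (y i) (x i) : A) * (inner A (y i) (x i) : A)‖ ≤ ‖SS A n y x‖ :=
    norm_le_norm_of_nonneg_of_le (star_mul_self_nonneg _) h1
  rw [CStarRing.norm_star_mul_self] at h2
  have := Real.sqrt_le_sqrt h2
  rwa [Real.sqrt_mul_self (norm_nonneg _)] at this

lemma norm_le_mustar (y : Fin n → E) (i : Fin n) : ‖y i‖ ≤ mustar A n y := by
  rw [RightCStarModule.norm_eq_csSup (A := A) (v := y i)]
  refine csSup_le ⟨0, 0, by simp, by simp⟩ ?_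
  rintro r ⟨w, hw, rfl⟩
  have h0 : ‖(inner A w (y i) : A)‖ = ‖(inner A (y i) w : A)‖ := by
    rw [← RightCStarModule.star_inner (y i) w, norm_star]
  rw [h0]
  exact (norm_inner_term_le_SS y (fun _ => w) i).trans (sqrt_norm_SS_le_mustar y hw)

lemma norm_inner_le_of_mustar_le_one {y : Fin n → E} (hy : mustar A n y ≤ 1) (i : Fin n) (v : E) :
    ‖(inner A (y i) v : A)‖ ≤ ‖v‖ := by
  calc ‖(inner A (y i) v : A)‖ ≤ ‖y i‖ * ‖v‖ := RightCStarModule.norm_inner_le E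
  _ ≤ 1 * ‖v‖ := by gcongr; exact (norm_le_mustar y i).trans hy
  _ = ‖v‖ := one_mul _

lemma starNorm_set_nonempty (x : Fin n → E) :
    {r : ℝ | ∃ y : Fin n → E, mustar A n y ≤ 1 ∧ r = Real.sqrt ‖SS A n y x‖}.Nonempty := by
  refine ⟨0, 0, ?_, by rw [SS_zero_left]; simp⟩
  refine mustar_le 0 fun z hz => ?_
  rw [SS_zero_left]
  simp

lemma starNorm_bddAbove (x : Fin n → E) :
    BddAbove {r : ℝ | ∃ y : Fin n → E, mustar A n y ≤ 1 ∧ r = Real.sqrt ‖SS A n y x‖} := by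
  refine ⟨Real.sqrt (∑ i, ‖x i‖ ^ 2), ?_⟩
  rintro r ⟨y, hy, rfl⟩
  refine Real.sqrt_le_sqrt <| (norm_SS_le _ _).trans <| Finset.sum_le_sum fun i _ => ?_
  exact pow_le_pow_left₀ (norm_nonneg _) (norm_inner_le_of_mustar_le_one hy i (x i)) 2

lemma le_starNorm {y : Fin n → E} (hy : mustar A n y ≤ 1) (x : Fin n → E) :
    Real.sqrt ‖SS A n y x‖ ≤ starNorm A n x := by
  rw [starNorm_def]
  exact le_csSup (starNorm_bddAbove x) ⟨y, hy, rfl⟩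

lemma starNorm_le (x : Fin n → E) {c : ℝ}
    (h : ∀ y : Fin n → E, mustar A n y ≤ 1 → Real.sqrt ‖SS A n y x‖ ≤ c) :
    starNorm A n x ≤ c := by
  rw [starNorm_def]
  exact csSup_le (starNorm_set_nonempty x) (by rintro r ⟨y, hy, rfl⟩; exact h y hy)

lemma starNorm_nonneg (x : Fin n → E) : 0 ≤ starNorm A n x := by
  have h0 : mustar A n (0 : Fin n → E) ≤ 1 := by
    refine mustar_le 0 fun z hz => ?_
    rw [SS_zero_left]; simp
  exact (Real.sqrt_nonneg _).trans (le_starNorm h0 x)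


/-! ### Triangle inequality via the C⋆-module `Aⁿ` -/

lemma sqrt_norm_sum_add_le (m : ℕ) (a b : Fin m → A) :
    Real.sqrt ‖∑ i, star (a i + b i) * (a i + b i)‖
      ≤ Real.sqrt ‖∑ i, star (a i) * a i‖ + Real.sqrt ‖∑ i, star (b i) * b i‖ := by
  have h := norm_add_le ((WithCStarModule.equiv A (Fin m → A)).symm (fun i => star (a i)))
    ((WithCStarModule.equiv A (Fin m → A)).symm (fun i => star (b i)))
  rw [← WithCStarModule.equiv_symm_add] at h
  simpa only [WithCStarModule.pi_norm, WithCStarModule.equiv_symm_pi_apply, Pi.add_apply,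
    WithCStarModule.inner_def, star_star, star_add] using h

lemma sqrt_norm_SS_add_le (y x x' : Fin n → E) :
    Real.sqrt ‖SS A n y (x + x')‖
      ≤ Real.sqrt ‖SS A n y x‖ + Real.sqrt ‖SS A n y x'‖ := by
  have h := sqrt_norm_sum_add_le n (fun i => (inner A (y i) (x i) : A))
    (fun i => (inner A (y i) (x' i) : A))
  simpa only [SS, Pi.add_apply, RightCStarModule.inner_add_right] using h

lemma starNorm_add_le (x x' : Fin n → E) :
    starNorm A n (x + x') ≤ starNorm A n x + starNorm A n x' := by
  refine starNorm_le _ fun y hy => ?_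
  exact (sqrt_norm_SS_add_le y x x').trans
    (add_le_add (le_starNorm hy x) (le_starNorm hy x'))

/-! ### Scalar multiplication -/

lemma SS_smul (c : ℂ) (y x : Fin n → E) :
    SS A n y (c • x) = ((‖c‖ ^ 2 : ℝ) : ℂ) • SS A n y x := by
  rw [SS, SS, Finset.smul_sum]
  refine Finset.sum_congr rfl fun i _ => ?_
  have h1 : (inner A (y i) ((c • x) i) : A) = c • (inner A (y i) (x i) : A) := by
    simp [Pi.smul_apply]
  rw [h1, star_smul, smul_mul_smul_comm]
  congr 1
  rw [Complex.star_def, Complex.conj_mul']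
  norm_cast

lemma sqrt_norm_SS_smul (c : ℂ) (y x : Fin n → E) :
    Real.sqrt ‖SS A n y (c • x)‖ = ‖c‖ * Real.sqrt ‖SS A n y x‖ := by
  rw [SS_smul, norm_smul]
  have : ‖((‖c‖ ^ 2 : ℝ) : ℂ)‖ = ‖c‖ ^ 2 := by
    rw [Complex.norm_real, Real.norm_eq_abs, abs_of_nonneg (by positivity)]
  rw [this, Real.sqrt_mul (by positivity), Real.sqrt_sq (norm_nonneg c)]

lemma starNorm_smul_le (c : ℂ) (x : Fin n → E) :
    starNorm A n (c • x) ≤ ‖c‖ * starNorm A n x := by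
  refine starNorm_le _ fun y hy => ?_
  rw [sqrt_norm_SS_smul]
  exact mul_le_mul_of_nonneg_left (le_starNorm hy x) (norm_nonneg c)

lemma SS_zero_right (y : Fin n → E) : SS A n y (0 : Fin n → E) = 0 := by
  simp [SS]

lemma starNorm_zero : starNorm A n (0 : Fin n → E) = 0 := by
  refine le_antisymm (starNorm_le _ fun y hy => ?_) (starNorm_nonneg 0)
  rw [SS_zero_right]; simp

lemma starNorm_smul (c : ℂ) (x : Fin n → E) :
    starNorm A n (c • x) = ‖c‖ * starNorm A n x := by
  rcases eq_or_ne c 0 with rfl | hc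
  · simp [starNorm_zero]
  · refine le_antisymm (starNorm_smul_le c x) ?_
    have h := starNorm_smul_le c⁻¹ (c • x)
    rw [smul_smul, inv_mul_cancel₀ hc, one_smul] at h
    calc ‖c‖ * starNorm A n x ≤ ‖c‖ * (‖c⁻¹‖ * starNorm A n (c • x)) :=
          mul_le_mul_of_nonneg_left h (norm_nonneg c)
      _ = starNorm A n (c • x) := by
          rw [norm_inv, ← mul_assoc, mul_inv_cancel₀ (by simpa using hc), one_mul]

/-! ### starNorm for n = 1 -/

lemma SS_one (y x : Fin 1 → E) :
    SS A 1 y x = star (inner A (y 0) (x 0) : A) * (inner A (y 0) (x 0) : A) := by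
  simp [SS, Fin.sum_univ_one]

lemma sqrt_norm_SS_one (y x : Fin 1 → E) :
    Real.sqrt ‖SS A 1 y x‖ = ‖(inner A (y 0) (x 0) : A)‖ := by
  rw [SS_one, CStarRing.norm_star_mul_self, Real.sqrt_mul_self (norm_nonneg _)]

lemma mustar_one (y : Fin 1 → E) : mustar A 1 y = ‖y 0‖ := by
  refine le_antisymm (mustar_le y fun z hz => ?_) (norm_le_mustar y 0)
  rw [sqrt_norm_SS_one]
  calc ‖(inner A (y 0) z : A)‖ ≤ ‖y 0‖ * ‖z‖ := RightCStarModule.norm_inner_le E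
  _ ≤ ‖y 0‖ * 1 := by gcongr
  _ = ‖y 0‖ := mul_one _

include A in
lemma norm_complex_inv_smul (x : E) (hx : x ≠ 0) : ‖((‖x‖⁻¹ : ℝ) : ℂ) • x‖ = 1 := by
  have hcore := RightCStarModule.norm_smul_complex (A := A) ((‖x‖⁻¹ : ℝ) : ℂ) x
  rw [hcore, Complex.norm_real, Real.norm_eq_abs, abs_of_nonneg (by positivity),
    inv_mul_cancel₀ (norm_ne_zero_iff.mpr hx)]

lemma starNorm_one (x : E) : starNorm A 1 (fun _ => x) = ‖x‖ := by
  refine le_antisymm (starNorm_le _ fun y hy => ?_) ?_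
  · rw [sqrt_norm_SS_one]
    exact norm_inner_le_of_mustar_le_one hy 0 x
  · rcases eq_or_ne x 0 with rfl | hx
    · simpa using starNorm_nonneg (A := A) (fun _ : Fin 1 => (0 : E))
    · set c : ℂ := ((‖x‖⁻¹ : ℝ) : ℂ)
      have hy1 : mustar A 1 (fun _ : Fin 1 => c • x) ≤ 1 := by
        rw [mustar_one]
        exact le_of_eq (norm_complex_inv_smul (A := A) x hx)
      have h := le_starNorm hy1 (fun _ => x)
      rw [sqrt_norm_SS_one] at h
      have hinner : (inner A (c • x) x : A) = star c • (inner A x x : A) := by simp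
      rw [hinner, norm_smul] at h
      have hnormc : ‖star c‖ = ‖x‖⁻¹ := by
        rw [norm_star, Complex.norm_real, Real.norm_eq_abs, abs_of_nonneg (by positivity)]
      rw [hnormc] at h
      have hxx : ‖(inner A x x : A)‖ = ‖x‖ ^ 2 := (RightCStarModule.norm_sq_eq (A := A)).symm
      rw [hxx] at h
      calc ‖x‖ = ‖x‖⁻¹ * ‖x‖ ^ 2 := by
            field_simp [norm_ne_zero_iff.mpr hx]
      _ ≤ starNorm A 1 (fun _ => x) := h

/-! ### Definiteness -/

lemma SS_single (i : Fin n) (v : E) (x : Fin n → E) :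
    SS A n (Pi.single i v) x = star (inner A v (x i) : A) * (inner A v (x i) : A) := by
  rw [SS, Fintype.sum_eq_single i]
  · rw [Pi.single_eq_same]
  · intro j hj
    rw [Pi.single_eq_of_ne hj]
    simp

lemma mustar_single_le (i : Fin n) (v : E) (hv : ‖v‖ ≤ 1) :
    mustar A n (Pi.single i v) ≤ 1 := by
  refine mustar_le _ fun z hz => ?_
  rw [SS_single, CStarRing.norm_star_mul_self, Real.sqrt_mul_self (norm_nonneg _)]
  calc ‖(inner A v z : A)‖ ≤ ‖v‖ * ‖z‖ := RightCStarModule.norm_inner_le E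
  _ ≤ 1 * 1 := by gcongr
  _ = 1 := mul_one _

lemma starNorm_eq_zero_iff (x : Fin n → E) : starNorm A n x = 0 ↔ x = 0 := by
  constructor
  · intro h
    by_contra hx
    obtain ⟨i, hi⟩ : ∃ i, x i ≠ 0 := by
      by_contra h'
      push_neg at h'
      exact hx (funext h')
    set c : ℂ := ((‖x i‖⁻¹ : ℝ) : ℂ)
    have hy1 : mustar A n (Pi.single i (c • x i)) ≤ 1 :=
      mustar_single_le i _ (le_of_eq (norm_complex_inv_smul (A := A) _ hi))
    have hle := le_starNorm hy1 x
    rw [h, SS_single, CStarRing.norm_star_mul_self, Real.sqrt_mul_self (norm_nonneg _)] at hle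
    have hinner : (inner A (c • x i) (x i) : A) = star c • (inner A (x i) (x i) : A) := by simp
    rw [hinner, norm_smul] at hle
    have hnormc : ‖star c‖ = ‖x i‖⁻¹ := by
      rw [norm_star, Complex.norm_real, Real.norm_eq_abs, abs_of_nonneg (by positivity)]
    have hxx : ‖(inner A (x i) (x i) : A)‖ = ‖x i‖ ^ 2 := (RightCStarModule.norm_sq_eq (A := A)).symm
    rw [hnormc, hxx] at hle
    have : ‖x i‖ ≤ 0 := by
      calc ‖x i‖ = ‖x i‖⁻¹ * ‖x i‖ ^ 2 := by
            field_simp [norm_ne_zero_iff.mpr hi]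
      _ ≤ 0 := hle
    exact hi (norm_le_zero_iff.mp this)
  · rintro rfl
    exact starNorm_zero

/-! ### (A1) permutation invariance -/

lemma SS_comp (σ : Equiv.Perm (Fin n)) (y x : Fin n → E) :
    SS A n (y ∘ σ) (x ∘ σ) = SS A n y x :=
  Fintype.sum_equiv σ _ _ fun i => rfl

lemma SS_comp_const (σ : Equiv.Perm (Fin n)) (y : Fin n → E) (z : E) :
    SS A n (y ∘ σ) (fun _ => z) = SS A n y (fun _ => z) :=
  Fintype.sum_equiv σ _ _ fun i => rfl

lemma mustar_comp (σ : Equiv.Perm (Fin n)) (y : Fin n → E) :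
    mustar A n (y ∘ σ) = mustar A n y := by
  rw [mustar_def, mustar_def]
  congr 1
  ext r
  constructor <;> rintro ⟨z, hz, rfl⟩ <;> refine ⟨z, hz, ?_⟩
  · rw [SS_comp_const]
  · rw [SS_comp_const]

lemma starNorm_comp (σ : Equiv.Perm (Fin n)) (x : Fin n → E) :
    starNorm A n (x ∘ σ) = starNorm A n x := by
  rw [starNorm_def, starNorm_def]
  congr 1
  ext r
  constructor
  · rintro ⟨y, hy, rfl⟩
    refine ⟨y ∘ ⇑σ⁻¹, by rwa [mustar_comp σ⁻¹], ?_⟩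
    have h1 : (y ∘ ⇑σ⁻¹) ∘ ⇑σ = y := by
      funext i; simp
    rw [← SS_comp σ (y ∘ ⇑σ⁻¹) x, h1]
  · rintro ⟨y, hy, rfl⟩
    exact ⟨y ∘ ⇑σ, by rwa [mustar_comp σ], by rw [SS_comp]⟩

/-! ### (A2) -/

lemma SS_pointwise_smul_le (α : Fin n → ℂ) (y x : Fin n → E) {M : ℝ}
    (hM : ∀ i, ‖α i‖ ≤ M) :
    SS A n y (fun i => α i • x i) ≤ (M ^ 2 : ℝ) • SS A n y x := by
  rw [SS, SS, Finset.smul_sum]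
  refine Finset.sum_le_sum fun i _ => ?_
  have h1 : (inner A (y i) (α i • x i) : A) = α i • (inner A (y i) (x i) : A) := by simp
  rw [h1, star_smul, smul_mul_smul_comm]
  have h2 : star (α i) * α i = ((‖α i‖ ^ 2 : ℝ) : ℂ) := by
    rw [Complex.star_def, Complex.conj_mul']
    norm_cast
  rw [h2]
  have h3 : ((‖α i‖ ^ 2 : ℝ) : ℂ) • (star (inner A (y i) (x i) : A) * (inner A (y i) (x i) : A))
      = (‖α i‖ ^ 2 : ℝ) • (star (inner A (y i) (x i) : A) * (inner A (y i) (x i) : A)) := by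
    rw [← Complex.coe_smul]
  rw [h3]
  have h4 : (0 : A) ≤ star (inner A (y i) (x i) : A) * (inner A (y i) (x i) : A) :=
    star_mul_self_nonneg _
  have h5 : ‖α i‖ ^ 2 ≤ M ^ 2 := by
    have := hM i
    have h0 : (0:ℝ) ≤ ‖α i‖ := norm_nonneg _
    nlinarith
  calc (‖α i‖ ^ 2 : ℝ) • (star (inner A (y i) (x i) : A) * (inner A (y i) (x i) : A))
      ≤ (M ^ 2 : ℝ) • (star (inner A (y i) (x i) : A) * (inner A (y i) (x i) : A)) := by
        rw [← sub_nonneg, ← sub_smul]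
        exact smul_nonneg (by linarith) h4

lemma starNorm_pointwise_smul_le (α : Fin (n + 1) → ℂ) (x : Fin (n + 1) → E) :
    starNorm A (n + 1) (fun i => α i • x i) ≤ (⨆ i, ‖α i‖) * starNorm A (n + 1) x := by
  set M : ℝ := ⨆ i, ‖α i‖
  have hM : ∀ i, ‖α i‖ ≤ M := fun i => le_ciSup (f := fun j => ‖α j‖) (Finite.bddAbove_range _) i
  have hM0 : 0 ≤ M := (norm_nonneg (α 0)).trans (hM 0)
  refine starNorm_le _ fun y hy => ?_
  have h1 := SS_pointwise_smul_le α y x hM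
  have h2 : ‖SS A (n+1) y (fun i => α i • x i)‖ ≤ ‖(M ^ 2 : ℝ) • SS A (n+1) y x‖ :=
    norm_le_norm_of_nonneg_of_le (SS_nonneg _ _) h1
  rw [norm_smul, Real.norm_eq_abs, abs_of_nonneg (by positivity)] at h2
  calc Real.sqrt ‖SS A (n+1) y (fun i => α i • x i)‖
      ≤ Real.sqrt (M ^ 2 * ‖SS A (n+1) y x‖) := Real.sqrt_le_sqrt h2
    _ = M * Real.sqrt ‖SS A (n+1) y x‖ := by
        rw [Real.sqrt_mul (by positivity), Real.sqrt_sq hM0]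
    _ ≤ M * starNorm A (n+1) x := by gcongr; exact le_starNorm hy x


/-! ### (A3) -/

lemma SS_succ {m : ℕ} (y x : Fin (m + 1) → E) :
    SS A (m + 1) y x
      = SS A m (fun i => y i.castSucc) (fun i => x i.castSucc)
        + star (inner A (y (Fin.last m)) (x (Fin.last m)) : A)
            * (inner A (y (Fin.last m)) (x (Fin.last m)) : A) := by
  rw [SS, SS, Fin.sum_univ_castSucc]

lemma SS_le_SS_succ {m : ℕ} (y x : Fin (m + 1) → E) :
    SS A m (fun i => y i.castSucc) (fun i => x i.castSucc) ≤ SS A (m + 1) y x := by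
  rw [SS_succ]
  exact le_add_of_nonneg_right (star_mul_self_nonneg _)

lemma mustar_init_le {m : ℕ} (y : Fin (m + 1) → E) :
    mustar A m (fun i => y i.castSucc) ≤ mustar A (m + 1) y := by
  refine mustar_le _ fun z hz => ?_
  refine le_trans ?_ (sqrt_norm_SS_le_mustar y hz)
  refine Real.sqrt_le_sqrt (norm_le_norm_of_nonneg_of_le (SS_nonneg _ _) ?_)
  exact SS_le_SS_succ y (fun _ => z)

lemma SS_snoc_zero {m : ℕ} (y x : Fin (m + 1) → E) :
    SS A (m + 2) (Fin.snoc y 0) (Fin.snoc x 0) = SS A (m + 1) y x := by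
  rw [SS_succ]
  have h1 : (fun i : Fin (m+1) => (Fin.snoc y (0:E) : Fin (m+2) → E) i.castSucc) = y := by
    funext i; simp
  have h2 : (fun i : Fin (m+1) => (Fin.snoc x (0:E) : Fin (m+2) → E) i.castSucc) = x := by
    funext i; simp
  rw [h1, h2]
  have h3 : (Fin.snoc y (0:E) : Fin (m+2) → E) (Fin.last (m+1)) = 0 := by simp
  rw [h3]
  simp

lemma mustar_snoc_zero {m : ℕ} (y : Fin (m + 1) → E) :
    mustar A (m + 2) (Fin.snoc y 0) = mustar A (m + 1) y := by
  rw [mustar_def, mustar_def]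
  congr 1
  ext r
  have key : ∀ z : E, SS A (m + 2) (Fin.snoc y 0) (fun _ => z) = SS A (m + 1) y (fun _ => z) := by
    intro z
    rw [SS_succ]
    have h1 : (fun i : Fin (m+1) => (Fin.snoc y (0:E) : Fin (m+2) → E) i.castSucc) = y := by funext i; simp
    have h3 : (Fin.snoc y (0:E) : Fin (m+2) → E) (Fin.last (m+1)) = 0 := by simp
    rw [h1, h3]
    simp
  constructor <;> rintro ⟨z, hz, rfl⟩ <;> exact ⟨z, hz, by rw [key]⟩

lemma starNorm_snoc_zero {m : ℕ} (x : Fin (m + 1) → E) :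
    starNorm A (m + 2) (Fin.snoc x 0) = starNorm A (m + 1) x := by
  rw [starNorm_def, starNorm_def]
  congr 1
  ext r
  constructor
  · rintro ⟨y, hy, rfl⟩
    refine ⟨fun i => y i.castSucc, (mustar_init_le y).trans hy, ?_⟩
    rw [SS_succ]
    have h2 : (fun i : Fin (m+1) => (Fin.snoc x (0:E) : Fin (m+2) → E) i.castSucc) = x := by
      funext i; simp
    have h3 : (Fin.snoc x (0:E) : Fin (m+2) → E) (Fin.last (m+1)) = 0 := by simp
    rw [h2, h3]
    simp
  · rintro ⟨y, hy, rfl⟩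
    refine ⟨Fin.snoc y 0, by rwa [mustar_snoc_zero], by rw [SS_snoc_zero]⟩


/-! ### (A4) -/

lemma sqrt_add_le {a b : ℝ} (ha : 0 ≤ a) (hb : 0 ≤ b) :
    Real.sqrt (a + b) ≤ Real.sqrt a + Real.sqrt b := by
  nlinarith [Real.sq_sqrt ha, Real.sq_sqrt hb, Real.sqrt_nonneg a, Real.sqrt_nonneg b,
    Real.sqrt_le_sqrt (show a + b ≤ (Real.sqrt a + Real.sqrt b)^2 by
      nlinarith [Real.sq_sqrt ha, Real.sq_sqrt hb, Real.sqrt_nonneg a, Real.sqrt_nonneg b]),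
    Real.sqrt_sq (by positivity : (0:ℝ) ≤ Real.sqrt a + Real.sqrt b)]

lemma smul_le_self_of_le_one {p : A} (hp : 0 ≤ p) {t : ℝ} (ht : t ≤ 1) : t • p ≤ p := by
  have h := smul_nonneg (sub_nonneg.mpr ht) hp
  rw [sub_smul, one_smul, sub_nonneg] at h
  exact h

/-- Cauchy–Schwarz for two terms, via the C⋆-module `A²`. -/
lemma cs_two (a b p q : A) :
    star (star a * p + star b * q) * (star a * p + star b * q)
      ≤ ‖star a * a + star b * b‖ • (star p * p + star q * q) := by
  have h := CStarModule.inner_mul_inner_swap_le (A := A)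
    (x := (WithCStarModule.equiv A (Fin 2 → A)).symm ![star a, star b])
    (y := (WithCStarModule.equiv A (Fin 2 → A)).symm ![star p, star q])
  simp only [WithCStarModule.pi_inner, WithCStarModule.equiv_symm_pi_apply,
    WithCStarModule.inner_def, Fin.sum_univ_two, Matrix.cons_val_zero, Matrix.cons_val_one,
    Matrix.head_cons] at h
  rw [WithCStarModule.pi_norm_sq] at h
  simp only [WithCStarModule.pi_inner, WithCStarModule.equiv_symm_pi_apply,
    WithCStarModule.inner_def, Fin.sum_univ_two, Matrix.cons_val_zero, Matrix.cons_val_one,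
    Matrix.head_cons, star_star] at h
  calc star (star a * p + star b * q) * (star a * p + star b * q)
      = (star p * a + star q * b) * (star a * p + star b * q) := by
        simp [star_add, star_mul, mul_add, add_mul]
    _ ≤ _ := h

section cfc

variable {B : A} {δ : ℝ}

private noncomputable def gg (δ : ℝ) : ℝ → ℝ := fun t => Real.sqrt t / (|t| + δ)

lemma gg_cont (hδ : 0 < δ) : Continuous (gg δ) :=
  Real.continuous_sqrt.div (continuous_abs.add continuous_const)
    (fun t => by positivity)

lemma gg_zero : gg δ 0 = 0 := by simp [gg]

lemma cfc_claims (hB : 0 ≤ B) (hδ : 0 < δ) :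
    ‖cfcₙ (gg δ) B * ((B : A) * cfcₙ (gg δ) B)‖ ≤ 1 ∧
    ‖B - star (cfcₙ (gg δ) B * B) * (cfcₙ (gg δ) B * B)‖ ≤ 3 * δ := by
  have hBsa : IsSelfAdjoint B := .of_nonneg hB
  have hgc : ContinuousOn (gg δ) (quasispectrum ℝ B) := (gg_cont hδ).continuousOn
  have hspec : ∀ t ∈ quasispectrum ℝ B, 0 ≤ t := quasispectrum_nonneg_of_nonneg B hB
  constructor
  · have e1 : cfcₙ (gg δ) B * ((B : A) * cfcₙ (gg δ) B)
        = cfcₙ (fun t => gg δ t * (t * gg δ t)) B := by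
      rw [cfcₙ_mul _ _ B hgc gg_zero (by fun_prop) (by simp [gg_zero]),
        cfcₙ_mul _ _ B (by fun_prop) rfl hgc gg_zero, cfcₙ_id' ℝ B]
    rw [e1]
    refine norm_cfcₙ_le fun t ht => ?_
    have ht0 : 0 ≤ t := hspec t ht
    have habs : |t| = t := abs_of_nonneg ht0
    have hexpr : gg δ t * (t * gg δ t) = t * t / ((t + δ) * (t + δ)) := by
      have hs : Real.sqrt t * Real.sqrt t = t := Real.mul_self_sqrt ht0
      simp only [gg, habs]
      field_simp
      nlinarith [hs]
    rw [hexpr, Real.norm_eq_abs, abs_of_nonneg (by positivity)]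
    rw [div_le_one (by positivity)]
    nlinarith
  · have hd : cfcₙ (fun t => gg δ t * t) B = cfcₙ (gg δ) B * B := by
      rw [cfcₙ_mul _ _ B hgc gg_zero (by fun_prop) rfl, cfcₙ_id' ℝ B]
    have hdsa : IsSelfAdjoint (cfcₙ (fun t => gg δ t * t) B) := cfcₙ_predicate _ B
    have hgtc : ContinuousOn (fun t => gg δ t * t) (quasispectrum ℝ B) := by fun_prop
    have hgt0 : (fun t => gg δ t * t) 0 = 0 := by simp [gg_zero]
    have e2 : cfcₙ (fun t => (gg δ t * t) * (gg δ t * t)) B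
        = cfcₙ (fun t => gg δ t * t) B * cfcₙ (fun t => gg δ t * t) B :=
      cfcₙ_mul _ _ B hgtc hgt0 hgtc hgt0
    have e3 : cfcₙ (fun t => t - (gg δ t * t) * (gg δ t * t)) B
        = B - cfcₙ (fun t => (gg δ t * t) * (gg δ t * t)) B := by
      rw [cfcₙ_sub _ _ B (by fun_prop) rfl (by fun_prop) (by simp [gg_zero]), cfcₙ_id' ℝ B]
    rw [← hd, hdsa.star_eq, ← e2, ← e3]
    refine norm_cfcₙ_le fun t ht => ?_
    have ht0 : 0 ≤ t := hspec t ht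
    have habs : |t| = t := abs_of_nonneg ht0
    have hs : Real.sqrt t * Real.sqrt t = t := Real.mul_self_sqrt ht0
    have hexpr : (gg δ t * t) * (gg δ t * t) = t * t * t / ((t + δ) * (t + δ)) := by
      simp only [gg, habs]
      field_simp
      nlinarith [hs]
    rw [hexpr, Real.norm_eq_abs]
    have hspos : (0:ℝ) < (t + δ) * (t + δ) := by positivity
    have h1 : t * t * t / ((t + δ) * (t + δ)) ≤ t := by
      rw [div_le_iff₀ hspos]
      nlinarith [mul_nonneg (mul_nonneg ht0 ht0) hδ.le, mul_nonneg ht0 (mul_nonneg hδ.le hδ.le)]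
    have h2 : t - 3 * δ ≤ t * t * t / ((t + δ) * (t + δ)) := by
      rw [le_div_iff₀ hspos]; nlinarith [mul_nonneg (mul_nonneg ht0 ht0) hδ.le,
        mul_nonneg ht0 (mul_nonneg hδ.le hδ.le), mul_nonneg hδ.le (mul_nonneg hδ.le hδ.le)]
    rw [abs_le]
    constructor <;> [linarith; linarith]

end cfc

lemma starNorm_snoc_last_le (x : Fin (n + 1) → E) :
    starNorm A (n + 2) (Fin.snoc x (x (Fin.last n))) ≤ starNorm A (n + 1) x := by
  refine starNorm_le _ fun y hy => ?_
  refine le_of_forall_pos_le_add fun ε hε => ?_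
  set δ : ℝ := ε ^ 2 / 3 with hδdef
  have hδ : 0 < δ := by positivity
  set xl : E := x (Fin.last n) with hxl
  set u : E := y (Fin.last n).castSucc with hu
  set v : E := y (Fin.last (n + 1)) with hv
  set β : A := (inner A u xl : A) with hβ
  set γ : A := (inner A v xl : A) with hγ
  set B : A := star β * β + star γ * γ with hBdef
  have hB : 0 ≤ B := add_nonneg (star_mul_self_nonneg _) (star_mul_self_nonneg _)
  set c : A := cfcₙ (gg δ) B with hcdef
  have hcsa : IsSelfAdjoint c := cfcₙ_predicate _ B
  obtain ⟨hn1, hn2⟩ := cfc_claims hB hδ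
  set aa : A := β * c with haa
  set bb : A := γ * c with hbb
  set w : E := u <• aa + v <• bb with hwdef
  have hwz : ∀ z : E,
      (inner A w z : A) = star aa * (inner A u z : A) + star bb * (inner A v z : A) := by
    intro z
    rw [hwdef]
    simp
  have hsum : star aa * aa + star bb * bb = c * (B * c) := by
    simp only [haa, hbb, star_mul, hcsa.star_eq, hBdef]
    noncomm_ring
  have hnormsum : ‖star aa * aa + star bb * bb‖ ≤ 1 := by rw [hsum]; exact hn1
  set y' : Fin (n + 1) → E := Fin.snoc (fun i : Fin n => y i.castSucc.castSucc) w with hy'def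
  have hy'cast : (fun i : Fin n => y' i.castSucc) = fun i : Fin n => y i.castSucc.castSucc := by
    funext i; simp [hy'def]
  have hy'last : y' (Fin.last n) = w := by simp [hy'def]
  -- claim 1 : mustar y' ≤ 1
  have hwle : ∀ z : E, star (inner A w z : A) * (inner A w z : A)
      ≤ star (inner A u z : A) * (inner A u z : A) + star (inner A v z : A) * (inner A v z : A) := by
    intro z
    have h1 := cs_two aa bb (inner A u z : A) (inner A v z : A)
    rw [← hwz z] at h1
    refine h1.trans ?_
    exact smul_le_self_of_le_one
      (add_nonneg (star_mul_self_nonneg _) (star_mul_self_nonneg _)) hnormsum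
  have claim1 : mustar A (n + 1) y' ≤ 1 := by
    refine le_trans (mustar_le _ fun z hz => ?_) hy
    refine le_trans ?_ (sqrt_norm_SS_le_mustar y hz)
    refine Real.sqrt_le_sqrt (norm_le_norm_of_nonneg_of_le (SS_nonneg _ _) ?_)
    simp only [SS, Fin.sum_univ_castSucc, hy'def, Fin.snoc_castSucc, Fin.snoc_last]
    rw [add_assoc]
    refine add_le_add_right ?_ _
    exact hwle z
  -- claim 2 : exact decomposition
  have hwxl : (inner A w xl : A) = c * B := by
    rw [hwz xl, ← hβ, ← hγ]
    simp only [haa, hbb, star_mul, hcsa.star_eq, hBdef]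
    noncomm_ring
  have hsnoccast : (fun i : Fin (n+1) => (Fin.snoc x xl : Fin (n+2) → E) i.castSucc) = x := by
    funext i; simp
  have hsnoclast : (Fin.snoc x xl : Fin (n+2) → E) (Fin.last (n+1)) = xl := by simp
  have claim2 : SS A (n + 2) y (Fin.snoc x xl)
      = SS A (n + 1) y' x + (B - star (c * B) * (c * B)) := by
    rw [SS_succ (A := A) y (Fin.snoc x xl), hsnoccast, hsnoclast,
      SS_succ (A := A) (fun i : Fin (n+1) => y i.castSucc) x,
      SS_succ (A := A) y' x, hy'cast, hy'last, hwxl]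
    rw [hBdef]
    abel
  rw [claim2]
  have hnorm : ‖SS A (n + 1) y' x + (B - star (c * B) * (c * B))‖
      ≤ ‖SS A (n + 1) y' x‖ + 3 * δ :=
    (norm_add_le _ _).trans (add_le_add_right hn2 _)
  calc Real.sqrt ‖SS A (n + 1) y' x + (B - star (c * B) * (c * B))‖
      ≤ Real.sqrt (‖SS A (n + 1) y' x‖ + 3 * δ) := Real.sqrt_le_sqrt hnorm
    _ ≤ Real.sqrt ‖SS A (n + 1) y' x‖ + Real.sqrt (3 * δ) :=
        sqrt_add_le (norm_nonneg _) (by positivity)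
    _ ≤ starNorm A (n + 1) x + ε := by
        refine add_le_add (le_starNorm claim1 x) ?_
        have : 3 * δ = ε ^ 2 := by rw [hδdef]; ring
        rw [this, Real.sqrt_sq hε.le]

end StarNormProof

/-- `(‖·‖*ₙ)` is a multi-norm: each `‖·‖*ₙ` is a norm on `Xⁿ`, `‖·‖*₁` is the norm of `X`,
and the axioms (A1)–(A4) hold. -/
theorem starNorm_isMultiNorm [CompleteSpace E] :
    (∀ x : E, starNorm A 1 (fun _ => x) = ‖x‖) ∧
    (∀ n (x : Fin (n + 1) → E), starNorm A (n + 1) x = 0 ↔ x = 0) ∧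
    (∀ n (x y : Fin (n + 1) → E),
      starNorm A (n + 1) (x + y) ≤ starNorm A (n + 1) x + starNorm A (n + 1) y) ∧
    (∀ n (c : ℂ) (x : Fin (n + 1) → E),
      starNorm A (n + 1) (c • x) = ‖c‖ * starNorm A (n + 1) x) ∧
    -- (A1)
    (∀ n (σ : Equiv.Perm (Fin (n + 1))) (x : Fin (n + 1) → E),
      starNorm A (n + 1) (x ∘ σ) = starNorm A (n + 1) x) ∧
    -- (A2)
    (∀ n (α : Fin (n + 1) → ℂ) (x : Fin (n + 1) → E),
      starNorm A (n + 1) (fun i => α i • x i) ≤ (⨆ i, ‖α i‖) * starNorm A (n + 1) x) ∧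
    -- (A3)
    (∀ n (x : Fin (n + 1) → E),
      starNorm A (n + 2) (Fin.snoc x 0) = starNorm A (n + 1) x) ∧
    -- (A4)
    (∀ n (x : Fin (n + 1) → E),
      starNorm A (n + 2) (Fin.snoc x (x (Fin.last n))) ≤ starNorm A (n + 1) x) := by
  exact ⟨StarNormProof.starNorm_one,
    fun n x => StarNormProof.starNorm_eq_zero_iff x,
    fun n x y => StarNormProof.starNorm_add_le x y,
    fun n c x => StarNormProof.starNorm_smul c x,
    fun n σ x => StarNormProof.starNorm_comp σ x,
    fun n α x => StarNormProof.starNorm_pointwise_smul_le α x,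
    fun n x => StarNormProof.starNorm_snoc_zero x,
    fun n x => StarNormProof.starNorm_snoc_last_le x⟩
end

section
/- Let Y be a closed submodule of X that is orthogonally complemented, i.e. every x ∈ X can be written x = y + z with y ∈ Y and ⟨y',z⟩ = 0 for all y' ∈ Y. Then for every x = (x₁,…,xₙ) ∈ Yⁿ one has ‖x‖*_{n,Y} = ‖x‖*_{n,X}, where ‖·‖*_{n,Y} and ‖·‖*_{n,X} denote the norm ‖·‖*ₙ computed in the Hilbert 𝔄-modules Y and X respectively. -/
open scoped RightActions

variable (A : Type*) {E : Type*} [NonUnitalCStarAlgebra A] [PartialOrder A] [StarOrderedRing A]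
  [NormedAddCommGroup E] [Module ℂ E] [SMul Aᵐᵒᵖ E] [RightCStarModule A E]

/-- `μ*ₙ` computed in the Hilbert submodule whose underlying set is `S`:
the supremum is taken over the closed unit ball of `S`. -/
noncomputable def mustarOn (S : Set E) (n : ℕ) (y : Fin n → E) : ℝ :=
  sSup {r : ℝ | ∃ z ∈ S, ‖z‖ ≤ 1 ∧
    r = Real.sqrt ‖∑ i, star (inner A (y i) z : A) * (inner A (y i) z : A)‖}

/-- `‖·‖*ₙ` computed in the Hilbert submodule whose underlying set is `S`:
the supremum is over tuples from `S` with `μ*ₙ ≤ 1` computed in `S`. -/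
noncomputable def starNormOn (S : Set E) (n : ℕ) (x : Fin n → E) : ℝ :=
  sSup {r : ℝ | ∃ y : Fin n → E, (∀ i, y i ∈ S) ∧ mustarOn A S n y ≤ 1 ∧
    r = Real.sqrt ‖∑ i, star (inner A (y i) (x i) : A) * (inner A (y i) (x i) : A)‖}

lemma rc_inner_add_left {x y z : E} : inner A (x + y) z = inner A x z + inner A y z := by
  rw [← RightCStarModule.star_inner z (x + y), RightCStarModule.inner_add_right, star_add,
    RightCStarModule.star_inner, RightCStarModule.star_inner]

lemma rc_inner_sub_right {x y z : E} : inner A x (y - z) = inner A x y - inner A x z :=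
  map_sub (AddMonoidHom.mk' (fun w => inner A x w) (fun _ _ => RightCStarModule.inner_add_right)) y z

lemma rc_inner_sub_left {x y z : E} : inner A (x - y) z = inner A x z - inner A y z :=
  map_sub (AddMonoidHom.mk' (fun w => inner A w z) (fun _ _ => rc_inner_add_left A)) x y

@[simp]
lemma rc_inner_zero_right {x : E} : inner A x (0 : E) = 0 :=
  map_zero (AddMonoidHom.mk' (fun w => inner A x w) (fun _ _ => RightCStarModule.inner_add_right))

lemma rc_inner_zero_left {x : E} : inner A (0 : E) x = 0 :=
  map_zero (AddMonoidHom.mk' (fun w => inner A w x) (fun _ _ => rc_inner_add_left A))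

lemma rc_inner_op_smul_left {a : A} {x y : E} : inner A (x <• a) y = star a * inner A x y := by
  rw [← RightCStarModule.star_inner y, RightCStarModule.inner_op_smul_right, star_mul,
    RightCStarModule.star_inner]

lemma rc_inner_smul_right_real {r : ℝ} {x y : E} : inner A x (r • y) = r • inner A x y := by
  have h₁ : r • y = (r : ℂ) • y := by simp
  rw [h₁, RightCStarModule.inner_smul_right_complex]
  simp

lemma rc_inner_smul_left_real {r : ℝ} {x y : E} : inner A (r • x) y = r • inner A x y := by
  rw [← RightCStarModule.star_inner y, rc_inner_smul_right_real, star_smul, star_trivial,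
    RightCStarModule.star_inner]

lemma rc_inner_swap_le (x y : E) : inner A y x * inner A x y ≤ ‖x‖ ^ 2 • inner A y y := by
  rcases eq_or_ne x 0 with h | h
  · subst h
    simp [rc_inner_zero_left]
  · have h₁ : ∀ a : A, (0 : A) ≤ ‖x‖ ^ 2 • (star a * a) - ‖x‖ ^ 2 • (star a * inner A x y)
        - ‖x‖ ^ 2 • (inner A y x * a) + ‖x‖ ^ 2 • (‖x‖ ^ 2 • inner A y y) := fun a => by
      calc (0 : A) ≤ inner A (x <• a - ‖x‖ ^ 2 • y) (x <• a - ‖x‖ ^ 2 • y) :=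
            RightCStarModule.inner_self_nonneg
        _ = star a * inner A x x * a - ‖x‖ ^ 2 • (star a * inner A x y)
              - ‖x‖ ^ 2 • (inner A y x * a) + ‖x‖ ^ 2 • (‖x‖ ^ 2 • inner A y y) := by
            simp only [rc_inner_sub_right, rc_inner_sub_left, RightCStarModule.inner_op_smul_right,
              rc_inner_op_smul_left, rc_inner_smul_left_real, rc_inner_smul_right_real, mul_sub,
              sub_mul, mul_smul_comm, smul_mul_assoc, smul_sub, mul_assoc]
            abel
        _ ≤ ‖x‖ ^ 2 • (star a * a) - ‖x‖ ^ 2 • (star a * inner A x y)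
              - ‖x‖ ^ 2 • (inner A y x * a) + ‖x‖ ^ 2 • (‖x‖ ^ 2 • inner A y y) := by
            gcongr
            calc star a * inner A x x * a ≤ ‖inner A x x‖ • (star a * a) :=
                CStarAlgebra.star_left_conjugate_le_norm_smul
                  (IsSelfAdjoint.of_nonneg RightCStarModule.inner_self_nonneg)
              _ = ‖x‖ ^ 2 • (star a * a) := by
                rw [RightCStarModule.norm_eq_sqrt_norm_inner_self (A := A) x,
                  Real.sq_sqrt (norm_nonneg _)]
    specialize h₁ (inner A x y)
    simp only [RightCStarModule.star_inner, sub_self, zero_sub, le_neg_add_iff_add_le,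
      add_zero] at h₁
    rwa [smul_le_smul_iff_of_pos_left (pow_pos (norm_pos_iff.mpr h) _)] at h₁

lemma rc_norm_inner_le (x y : E) : ‖inner A x y‖ ≤ ‖x‖ * ‖y‖ := by
  have : ‖inner A x y‖ ^ 2 ≤ (‖x‖ * ‖y‖) ^ 2 := by
   calc ‖inner A x y‖ ^ 2 = ‖inner A y x * inner A x y‖ := by
          rw [← RightCStarModule.star_inner x y, CStarRing.norm_star_mul_self, pow_two]
    _ ≤ ‖‖x‖ ^ 2 • inner A y y‖ := by
        refine CStarAlgebra.norm_le_norm_of_nonneg_of_le ?_ (rc_inner_swap_le A x y)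
        rw [← RightCStarModule.star_inner x y]
        exact star_mul_self_nonneg _
    _ = ‖x‖ ^ 2 * ‖inner A y y‖ := by rw [norm_smul, Real.norm_of_nonneg (by positivity)]
    _ = ‖x‖ ^ 2 * ‖y‖ ^ 2 := by
        rw [RightCStarModule.norm_eq_sqrt_norm_inner_self (A := A) y, Real.sq_sqrt (norm_nonneg _)]
    _ = (‖x‖ * ‖y‖) ^ 2 := by ring
  exact (pow_le_pow_iff_left₀ (norm_nonneg _) (by positivity) (by norm_num)).mp this

lemma mustar_set_bddAbove (S : Set E) (n : ℕ) (y : Fin n → E) :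
    BddAbove {r : ℝ | ∃ z ∈ S, ‖z‖ ≤ 1 ∧
      r = Real.sqrt ‖∑ i, star (inner A (y i) z : A) * (inner A (y i) z : A)‖} := by
  refine ⟨Real.sqrt (∑ i, ‖y i‖ ^ 2), ?_⟩
  rintro r ⟨z, hz, hz1, rfl⟩
  apply Real.sqrt_le_sqrt
  calc ‖∑ i, star (inner A (y i) z : A) * inner A (y i) z‖
      ≤ ∑ i, ‖star (inner A (y i) z : A) * inner A (y i) z‖ := norm_sum_le _ _
    _ ≤ ∑ i, ‖y i‖ ^ 2 := by
        refine Finset.sum_le_sum fun i _ => ?_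
        rw [CStarRing.norm_star_mul_self]
        have h := rc_norm_inner_le A (y i) z
        have h2 : ‖(inner A (y i) z : A)‖ * ‖(inner A (y i) z : A)‖ ≤ (‖y i‖ * ‖z‖) * (‖y i‖ * ‖z‖) :=
          mul_le_mul h h (norm_nonneg _) (by positivity)
        have h3 : ‖z‖ * ‖z‖ ≤ 1 :=
          mul_le_one₀ hz1 (norm_nonneg z) hz1
        nlinarith [norm_nonneg (y i), norm_nonneg z, sq_nonneg (‖y i‖)]

lemma mustar_set_nonempty (S : Set E) (h0 : (0:E) ∈ S) (n : ℕ) (y : Fin n → E) :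
    {r : ℝ | ∃ z ∈ S, ‖z‖ ≤ 1 ∧
      r = Real.sqrt ‖∑ i, star (inner A (y i) z : A) * (inner A (y i) z : A)‖}.Nonempty :=
  ⟨0, 0, h0, by simp, by simp [rc_inner_zero_right]⟩

lemma norm_proj_le (Y : Submodule ℂ E) {p q : E} (hp : p ∈ Y)
    (horth : ∀ y' ∈ Y, (inner A y' q : A) = 0) : ‖p‖ ≤ ‖p + q‖ := by
  have hpq : (inner A p q : A) = 0 := horth p hp
  have hqp : (inner A q p : A) = 0 := by rw [← RightCStarModule.star_inner, hpq, star_zero]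
  have hdecomp : (inner A (p + q) (p + q) : A) = inner A p p + inner A q q := by
    rw [rc_inner_add_left A, RightCStarModule.inner_add_right,
      RightCStarModule.inner_add_right, hpq, hqp]
    abel
  have hle : (inner A p p : A) ≤ inner A (p + q) (p + q) := by
    rw [hdecomp]
    exact le_add_of_nonneg_right RightCStarModule.inner_self_nonneg
  rw [RightCStarModule.norm_eq_sqrt_norm_inner_self (A := A) p,
    RightCStarModule.norm_eq_sqrt_norm_inner_self (A := A) (p + q)]
  exact Real.sqrt_le_sqrt
    (CStarAlgebra.norm_le_norm_of_nonneg_of_le RightCStarModule.inner_self_nonneg hle)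

/-- When all `y i ∈ Y`, `μ*ₙ` over `Y` agrees with `μ*ₙ` over all of `E`. -/
lemma mustarOn_eq (Y : Submodule ℂ E)
    (hYcompl : ∀ v : E, ∃ y z : E, y ∈ Y ∧ v = y + z ∧
      ∀ y' ∈ Y, (inner A y' z : A) = 0)
    (n : ℕ) (y : Fin n → E) (hy : ∀ i, y i ∈ Y) :
    mustarOn A (Y : Set E) n y = mustarOn A (Set.univ : Set E) n y := by
  unfold mustarOn
  congr 1
  ext r
  constructor
  · rintro ⟨z, hz, hz1, rfl⟩
    exact ⟨z, trivial, hz1, rfl⟩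
  · rintro ⟨z, -, hz1, rfl⟩
    obtain ⟨p, q, hp, hzpq, horth⟩ := hYcompl z
    refine ⟨p, hp, ?_, ?_⟩
    · calc ‖p‖ ≤ ‖p + q‖ := norm_proj_le A Y hp horth
        _ = ‖z‖ := by rw [← hzpq]
        _ ≤ 1 := hz1
    · have hinner : ∀ i, (inner A (y i) z : A) = inner A (y i) p := by
        intro i
        rw [hzpq, RightCStarModule.inner_add_right, horth (y i) (hy i), add_zero]
      simp only [hinner]

/-- If `Y` is an orthogonally complemented closed submodule of `X` and `x ∈ Yⁿ`, then
`‖x‖*_{n,Y} = ‖x‖*_{n,X}`. -/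
theorem starNormOn_eq_of_orthogonally_complemented [CompleteSpace E] (Y : Submodule ℂ E)
    (hYclosed : IsClosed (Y : Set E))
    (hYsmul : ∀ (a : A), ∀ y ∈ Y, MulOpposite.op a • y ∈ Y)
    (hYcompl : ∀ v : E, ∃ y z : E, y ∈ Y ∧ v = y + z ∧
      ∀ y' ∈ Y, (inner A y' z : A) = 0)
    (n : ℕ) (x : Fin n → E) (hx : ∀ i, x i ∈ Y) :
    starNormOn A (Y : Set E) n x = starNormOn A (Set.univ : Set E) n x := by
  unfold starNormOn
  congr 1
  ext r
  constructor
  · rintro ⟨y, hy, hmu, rfl⟩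
    refine ⟨y, fun i => trivial, ?_, rfl⟩
    rw [← mustarOn_eq A Y hYcompl n y hy]
    exact hmu
  · rintro ⟨y, -, hmu, rfl⟩
    choose p q hp hsum horth using fun i => hYcompl (y i)
    refine ⟨p, hp, ?_, ?_⟩
    · refine le_trans ?_ hmu
      refine csSup_le_csSup (mustar_set_bddAbove A Set.univ n y)
        (mustar_set_nonempty A (Y : Set E) (Submodule.zero_mem Y) n p) ?_
      rintro r ⟨z, hz, hz1, rfl⟩
      refine ⟨z, trivial, hz1, ?_⟩
      have h : ∀ i, (inner A (p i) z : A) = inner A (y i) z := by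
        intro i
        have hq : (inner A (q i) z : A) = 0 := by
          rw [← RightCStarModule.star_inner, horth i z hz, star_zero]
        rw [hsum i, rc_inner_add_left A, hq, add_zero]
      simp only [h]
    · have h : ∀ i, (inner A (y i) (x i) : A) = inner A (p i) (x i) := fun i => by
        have hq : (inner A (q i) (x i) : A) = 0 := by
          rw [← RightCStarModule.star_inner, horth i (x i) (hx i), star_zero]
        rw [hsum i, rc_inner_add_left A, hq, add_zero]
      simp only [h]
end

section
/- Let 𝔄 be a commutative C*-algebra, regarded as a Hilbert C*-module over itself via ⟨a,b⟩ = a*b. Then for all a₁,…,aₙ ∈ 𝔄, ‖(a₁,…,aₙ)‖^𝔄_n = ‖(a₁,…,aₙ)‖*ₙ = max₁≤i≤n ‖aᵢ‖. -/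
open scoped RightActions

section Defs

instance RightCStarModule.self {A : Type*} [NonUnitalCStarAlgebra A] [PartialOrder A]
    [StarOrderedRing A] : RightCStarModule A A where
  inner x y := star x * y
  inner_add_right := mul_add ..
  inner_self_nonneg := star_mul_self_nonneg _
  inner_self := CStarRing.star_mul_self_eq_zero_iff _
  inner_op_smul_right := by intros; simp [mul_assoc]
  inner_smul_right_complex := mul_smul_comm ..
  star_inner x y := by simp
  norm_eq_sqrt_norm_inner_self x := by
    rw [CStarRing.norm_star_mul_self, Real.sqrt_mul_self (norm_nonneg x)]

variable (A : Type*) {E : Type*} [NonUnitalCStarAlgebra A] [PartialOrder A] [StarOrderedRing A]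
  [NormedAddCommGroup E] [Module ℂ E] [SMul Aᵐᵒᵖ E] [RightCStarModule A E]

/-- A projection on the Hilbert `A`-module `E`: a bounded `A`-linear idempotent map which is
self-adjoint with respect to the `A`-valued inner product. -/
def IsProjectionOp (P : E →L[ℂ] E) : Prop :=
  (∀ (a : A) (v : E), P (MulOpposite.op a • v) = MulOpposite.op a • P v) ∧
  (∀ v : E, P (P v) = P v) ∧
  (∀ v w : E, (inner A (P v) w : A) = inner A v (P w))

/-- The Hilbert C*-multi-norm `‖x‖^X_n`. -/
noncomputable def hilbertCStarMultiNorm (n : ℕ) (x : Fin n → E) : ℝ :=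
  sSup {r : ℝ | ∃ P : Fin n → E →L[ℂ] E, (∀ i, IsProjectionOp A (P i)) ∧
    (∀ i j, i ≠ j → ∀ v, P i (P j v) = 0) ∧ (∀ v, ∑ i, P i v = v) ∧
    r = ‖∑ i, P i (x i)‖}

end Defs

section AuxLemmas

variable {B : Type*} [NonUnitalCommCStarAlgebra B] [PartialOrder B] [StarOrderedRing B]

/-- In a commutative C⋆-algebra, `b * d ≤ ‖b‖ • d` for `0 ≤ b`, `0 ≤ d`. -/
lemma aux_mul_le_norm_smul {b d : B} (hb : 0 ≤ b) (hd : 0 ≤ d) : b * d ≤ ‖b‖ • d := by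
  have hs_nonneg : (0:B) ≤ CFC.sqrt d := CFC.sqrt_nonneg d
  have hs : CFC.sqrt d * CFC.sqrt d = d := CFC.sqrt_mul_sqrt_self d hd
  set s := CFC.sqrt d with hsdef
  have hsa : star s = s := (IsSelfAdjoint.of_nonneg hs_nonneg).star_eq
  calc b * d = star s * b * s := by rw [hsa, ← hs]; ac_rfl
    _ ≤ ‖b‖ • (star s * s) :=
        CStarAlgebra.star_left_conjugate_le_norm_smul (IsSelfAdjoint.of_nonneg hb)
    _ = ‖b‖ • d := by rw [hsa, hs]

lemma aux_norm_le_of_sq {c : B} {K : ℝ} (hc : 0 ≤ c) (hK : 0 ≤ K)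
    (h : c * c ≤ K • c) : ‖c‖ ≤ K := by
  have hsa : star c = c := (IsSelfAdjoint.of_nonneg hc).star_eq
  have hccn : (0:B) ≤ c * c := by nth_rewrite 1 [← hsa]; exact star_mul_self_nonneg c
  have h1 : ‖c * c‖ = ‖c‖ * ‖c‖ := by nth_rewrite 1 [← hsa]; exact CStarRing.norm_star_mul_self
  have h2 : ‖c * c‖ ≤ ‖K • c‖ := CStarAlgebra.norm_le_norm_of_nonneg_of_le hccn h
  have h3 : ‖K • c‖ = K * ‖c‖ := by rw [norm_smul, Real.norm_of_nonneg hK]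
  rcases (norm_nonneg c).eq_or_lt with h0 | h0
  · linarith
  · nlinarith

lemma aux_inner_eq (x y : B) : (inner B x y : B) = star x * y := rfl

lemma aux_sq_inner (u v : B) : star (star u * v) * (star u * v) = star v * (star u * u) * v := by
  rw [star_mul, star_star, mul_mul_mul_comm]
  simp only [mul_assoc]

lemma aux_sq_inner' (u v : B) : star (star u * v) * (star u * v) = star u * (star v * v) * u := by
  rw [star_mul, star_star, mul_mul_mul_comm, mul_comm (star v) (star u), mul_mul_mul_comm,
    mul_assoc (star u) u (star v * v), mul_comm u (star v * v), ← mul_assoc]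

lemma aux_key1 {m : ℕ} (a : Fin m → B) {M : ℝ} (hM0 : 0 ≤ M) (hle : ∀ i, ‖a i‖ ≤ M)
    (P : Fin m → B →L[ℂ] B) (hproj : ∀ i, IsProjectionOp B (P i))
    (horth : ∀ i j, i ≠ j → ∀ v, P i (P j v) = 0) :
    ‖∑ i, P i (a i)‖ ≤ M := by
  set b : Fin m → B := fun i => P i (a i) with hb
  have h0 : ∀ i j, i ≠ j → star (b i) * b j = 0 := by
    intro i j hij
    have h := (hproj i).2.2 (a i) (P j (a j))
    rw [horth i j hij] at h
    simpa [hb, aux_inner_eq] using h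
  set d : Fin m → B := fun i => star (b i) * b i with hd
  have hdnn : ∀ i, (0:B) ≤ d i := fun i => star_mul_self_nonneg _
  have hdab : ∀ i, d i = star (a i) * b i := by
    intro i
    have h := (hproj i).2.2 (a i) (P i (a i))
    rw [(hproj i).2.1 (a i)] at h
    simpa [hd, hb, aux_inner_eq] using h
  have hsq : ∀ i, d i * d i ≤ (M * M) • d i := by
    intro i
    have hsd : star (d i) = d i := (IsSelfAdjoint.of_nonneg (hdnn i)).star_eq
    have e1 : d i * d i = (star (a i) * a i) * d i := by
      calc d i * d i = d i * star (d i) := by rw [hsd]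
        _ = (star (a i) * b i) * star (star (a i) * b i) := by rw [← hdab i, hsd, hdab i]
        _ = (star (a i) * b i) * (star (b i) * a i) := by rw [star_mul, star_star]
        _ = (star (a i) * a i) * (star (b i) * b i) := by ac_rfl
        _ = (star (a i) * a i) * d i := rfl
    calc d i * d i = (star (a i) * a i) * d i := e1
      _ ≤ ‖star (a i) * a i‖ • d i :=
          aux_mul_le_norm_smul (star_mul_self_nonneg _) (hdnn i)
      _ ≤ (M * M) • d i := by
          refine smul_le_smul_of_nonneg_right ?_ (hdnn i)
          rw [CStarRing.norm_star_mul_self]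
          exact mul_le_mul (hle i) (hle i) (norm_nonneg _) hM0
  set c := ∑ i, d i with hc
  have hcnn : (0:B) ≤ c := Finset.sum_nonneg fun i _ => hdnn i
  have hdij : ∀ i j, i ≠ j → d i * d j = 0 := by
    intro i j hij
    have e : d i * d j = (star (b i) * b j) * (b i * star (b j)) := by
      simp only [hd]; ac_rfl
    rw [e, h0 i j hij, zero_mul]
  have hcc : c * c = ∑ i, d i * d i := by
    rw [hc, Finset.sum_mul_sum]
    refine Finset.sum_congr rfl fun i _ => ?_
    exact Finset.sum_eq_single i (fun j _ hji => hdij i j (Ne.symm hji)) (by simp)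
  have hccle : c * c ≤ (M * M) • c := by
    rw [hcc, hc, Finset.smul_sum]
    exact Finset.sum_le_sum fun i _ => hsq i
  have hcM : ‖c‖ ≤ M * M := aux_norm_le_of_sq hcnn (mul_nonneg hM0 hM0) hccle
  have hnorm : ‖∑ i, b i‖ * ‖∑ i, b i‖ = ‖c‖ := by
    rw [← CStarRing.norm_star_mul_self]
    congr 1
    rw [star_sum, Finset.sum_mul_sum, hc]
    refine Finset.sum_congr rfl fun i _ => ?_
    exact Finset.sum_eq_single i (fun j _ hji => h0 i j (Ne.symm hji)) (by simp)
  nlinarith [norm_nonneg (∑ i, b i)]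

lemma aux_key2 {m : ℕ} (a : Fin m → B) {M : ℝ} (hM0 : 0 ≤ M) (hle : ∀ i, ‖a i‖ ≤ M)
    (y : Fin m → B) (hy : mustar B m y ≤ 1) :
    ‖∑ i, star (inner B (y i) (a i) : B) * (inner B (y i) (a i) : B)‖ ≤ M * M := by
  set Y := ∑ i, star (y i) * y i with hY
  have hYnn : (0:B) ≤ Y := Finset.sum_nonneg fun i _ => star_mul_self_nonneg _
  have hYsa : star Y = Y := (IsSelfAdjoint.of_nonneg hYnn).star_eq
  have hTel : ∀ z : B,
      ∑ i, star (inner B (y i) z : B) * (inner B (y i) z : B) = star z * Y * z := by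
    intro z
    rw [hY, Finset.mul_sum, Finset.sum_mul]
    refine Finset.sum_congr rfl fun i _ => ?_
    simp only [aux_inner_eq]
    exact aux_sq_inner (y i) z
  have hTbdd : BddAbove {r : ℝ | ∃ z : B, ‖z‖ ≤ 1 ∧
      r = Real.sqrt ‖∑ i, star (inner B (y i) z : B) * (inner B (y i) z : B)‖} := by
    refine ⟨Real.sqrt ‖Y‖, ?_⟩
    rintro r ⟨z, hz, rfl⟩
    apply Real.sqrt_le_sqrt
    rw [hTel z]
    calc ‖star z * Y * z‖ ≤ ‖star z * Y‖ * ‖z‖ := norm_mul_le _ _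
      _ ≤ ‖star z‖ * ‖Y‖ * ‖z‖ := by gcongr; exact norm_mul_le _ _
      _ = ‖z‖ * ‖Y‖ * ‖z‖ := by rw [norm_star]
      _ ≤ 1 * ‖Y‖ * 1 := by gcongr
      _ = ‖Y‖ := by ring
  have hYle : ‖Y‖ ≤ 1 := by
    rcases eq_or_ne Y 0 with h | h
    · simp [h]
    have hYpos : (0:ℝ) < ‖Y‖ := norm_pos_iff.mpr h
    set z : B := (‖Y‖⁻¹ : ℝ) • Y with hz
    have hznorm : ‖z‖ ≤ 1 := by
      rw [hz, norm_smul, Real.norm_of_nonneg (inv_nonneg.mpr hYpos.le),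
        inv_mul_cancel₀ hYpos.ne']
    have hzYz : star z * Y * z = (‖Y‖⁻¹ * ‖Y‖⁻¹) • (Y * Y * Y) := by
      rw [hz, star_smul, star_trivial, hYsa]
      simp only [smul_mul_assoc, mul_smul_comm, smul_smul]
    have hYY : ‖Y * Y‖ = ‖Y‖ * ‖Y‖ := by
      nth_rewrite 1 [← hYsa]; exact CStarRing.norm_star_mul_self
    have hYYsa : star (Y * Y) = Y * Y := by rw [star_mul, hYsa]
    have hY4 : ‖Y * Y * (Y * Y)‖ = (‖Y‖ * ‖Y‖) * (‖Y‖ * ‖Y‖) := by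
      nth_rewrite 1 [← hYYsa]
      rw [CStarRing.norm_star_mul_self, hYY]
    have hY3 : ‖Y‖ * ‖Y‖ * ‖Y‖ ≤ ‖Y * Y * Y‖ := by
      have h1 : ‖Y * Y * (Y * Y)‖ ≤ ‖Y * Y * Y‖ * ‖Y‖ := by
        rw [show Y * Y * (Y * Y) = (Y * Y * Y) * Y by ac_rfl]
        exact norm_mul_le _ _
      rw [hY4] at h1
      nlinarith
    have hmem : Real.sqrt ‖star z * Y * z‖ ∈ {r : ℝ | ∃ z : B, ‖z‖ ≤ 1 ∧
        r = Real.sqrt ‖∑ i, star (inner B (y i) z : B) * (inner B (y i) z : B)‖} :=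
      ⟨z, hznorm, by rw [hTel z]⟩
    have hle1 : Real.sqrt ‖star z * Y * z‖ ≤ 1 := (le_csSup hTbdd hmem).trans hy
    have h2 : ‖star z * Y * z‖ ≤ 1 := by
      nlinarith [Real.sq_sqrt (norm_nonneg (star z * Y * z)),
        Real.sqrt_nonneg ‖star z * Y * z‖]
    have h3 : ‖star z * Y * z‖ = (‖Y‖⁻¹ * ‖Y‖⁻¹) * ‖Y * Y * Y‖ := by
      rw [hzYz, norm_smul, Real.norm_of_nonneg (by positivity)]
    have h6 : ‖Y‖ ≤ ‖star z * Y * z‖ := by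
      rw [h3]
      calc ‖Y‖ = (‖Y‖⁻¹ * ‖Y‖⁻¹) * (‖Y‖ * ‖Y‖ * ‖Y‖) := by field_simp
        _ ≤ (‖Y‖⁻¹ * ‖Y‖⁻¹) * ‖Y * Y * Y‖ :=
            mul_le_mul_of_nonneg_left hY3 (by positivity)
    linarith
  have heach : ∀ i, star (inner B (y i) (a i) : B) * (inner B (y i) (a i) : B)
      ≤ (M * M) • (star (y i) * y i) := by
    intro i
    have e : star (inner B (y i) (a i) : B) * (inner B (y i) (a i) : B)
        = star (y i) * (star (a i) * a i) * y i := by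
      simp only [aux_inner_eq]
      exact aux_sq_inner' (y i) (a i)
    rw [e]
    calc star (y i) * (star (a i) * a i) * y i
        ≤ ‖star (a i) * a i‖ • (star (y i) * y i) :=
          CStarAlgebra.star_left_conjugate_le_norm_smul (IsSelfAdjoint.star_mul_self _)
      _ ≤ (M * M) • (star (y i) * y i) := by
          refine smul_le_smul_of_nonneg_right ?_ (star_mul_self_nonneg _)
          rw [CStarRing.norm_star_mul_self]
          exact mul_le_mul (hle i) (hle i) (norm_nonneg _) hM0
  have hsumnn : (0:B) ≤ ∑ i, star (inner B (y i) (a i) : B) * (inner B (y i) (a i) : B) :=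
    Finset.sum_nonneg fun i _ => star_mul_self_nonneg _
  have hsumle : ∑ i, star (inner B (y i) (a i) : B) * (inner B (y i) (a i) : B)
      ≤ (M * M) • Y := by
    rw [hY, Finset.smul_sum]
    exact Finset.sum_le_sum fun i _ => heach i
  calc ‖∑ i, star (inner B (y i) (a i) : B) * (inner B (y i) (a i) : B)‖
      ≤ ‖(M * M) • Y‖ := CStarAlgebra.norm_le_norm_of_nonneg_of_le hsumnn hsumle
    _ = (M * M) * ‖Y‖ := by rw [norm_smul, Real.norm_of_nonneg (mul_nonneg hM0 hM0)]
    _ ≤ (M * M) * 1 := by gcongr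
    _ = M * M := mul_one _

end AuxLemmas

/-- For a commutative C*-algebra `𝔄`, viewed as a Hilbert C*-module over itself via
`⟨a,b⟩ = a*b`, one has `‖(a₁,…,aₙ)‖^𝔄_n = ‖(a₁,…,aₙ)‖*ₙ = max₁≤i≤n ‖aᵢ‖`. -/
theorem hilbertCStarMultiNorm_eq_starNorm_eq_max_of_comm
    (A : Type*) [NonUnitalCommCStarAlgebra A] [PartialOrder A] [StarOrderedRing A]
    (n : ℕ) (a : Fin (n + 1) → A) :
    hilbertCStarMultiNorm A (n + 1) a = ⨆ i, ‖a i‖ ∧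
    starNorm A (n + 1) a = ⨆ i, ‖a i‖ := by
  classical
  set M := ⨆ i, ‖a i‖ with hM
  have hbdd : BddAbove (Set.range fun i => ‖a i‖) := Set.Finite.bddAbove (Set.finite_range _)
  obtain ⟨i₀, hi₀⟩ : ∃ i, ‖a i‖ = M := exists_eq_ciSup_of_finite
  have hle : ∀ i, ‖a i‖ ≤ M := fun i => le_ciSup hbdd i
  have hM0 : (0:ℝ) ≤ M := hi₀ ▸ norm_nonneg _
  constructor
  · -- hilbertCStarMultiNorm = M
    have hub : ∀ r ∈ {r : ℝ | ∃ P : Fin (n+1) → A →L[ℂ] A,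
        (∀ i, IsProjectionOp A (P i)) ∧ (∀ i j, i ≠ j → ∀ v, P i (P j v) = 0) ∧
        (∀ v, ∑ i, P i v = v) ∧ r = ‖∑ i, P i (a i)‖}, r ≤ M := by
      rintro r ⟨P, h1, h2, _, rfl⟩
      exact aux_key1 a hM0 hle P h1 h2
    have hmem : M ∈ {r : ℝ | ∃ P : Fin (n+1) → A →L[ℂ] A,
        (∀ i, IsProjectionOp A (P i)) ∧ (∀ i j, i ≠ j → ∀ v, P i (P j v) = 0) ∧
        (∀ v, ∑ i, P i v = v) ∧ r = ‖∑ i, P i (a i)‖} := by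
      refine ⟨fun i => if i = i₀ then ContinuousLinearMap.id ℂ A else 0, ?_, ?_, ?_, ?_⟩
      · intro i
        by_cases h : i = i₀ <;>
          simp [IsProjectionOp, h, aux_inner_eq]
      · intro i j hij v
        by_cases hj : j = i₀
        · have hi : i ≠ i₀ := hj ▸ hij
          simp [hi, hj]
        · simp [hj]
      · intro v
        simp [apply_ite (fun f : A →L[ℂ] A => f v)]
      · rw [show ∑ i, (if i = i₀ then ContinuousLinearMap.id ℂ A else 0) (a i) = a i₀ by
          rw [Finset.sum_eq_single i₀ (fun j _ hj => by simp [hj]) (by simp)]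
          simp]
        exact hi₀.symm
    unfold hilbertCStarMultiNorm
    exact le_antisymm (csSup_le ⟨M, hmem⟩ hub) (le_csSup ⟨M, hub⟩ hmem)
  · -- starNorm = M
    have hub : ∀ r ∈ {r : ℝ | ∃ y : Fin (n+1) → A, mustar A (n+1) y ≤ 1 ∧
        r = Real.sqrt ‖∑ i, star (inner A (y i) (a i) : A) * (inner A (y i) (a i) : A)‖}, r ≤ M := by
      rintro r ⟨y, hy, rfl⟩
      have h := aux_key2 a hM0 hle y hy
      calc Real.sqrt ‖∑ i, star (inner A (y i) (a i) : A) * (inner A (y i) (a i) : A)‖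
          ≤ Real.sqrt (M * M) := Real.sqrt_le_sqrt h
        _ = M := by rw [Real.sqrt_mul_self hM0]
    have hmem : M ∈ {r : ℝ | ∃ y : Fin (n+1) → A, mustar A (n+1) y ≤ 1 ∧
        r = Real.sqrt ‖∑ i, star (inner A (y i) (a i) : A) * (inner A (y i) (a i) : A)‖} := by
      by_cases hMz : M = 0
      · refine ⟨0, ?_, ?_⟩
        · unfold mustar
          refine csSup_le ⟨_, ⟨0, by simp, rfl⟩⟩ ?_
          rintro r ⟨z, hz, rfl⟩
          simp [aux_inner_eq]
        · rw [show ∑ i : Fin (n+1), star (inner A ((0 : Fin (n+1) → A) i) (a i) : A) *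
              (inner A ((0 : Fin (n+1) → A) i) (a i) : A) = 0 by simp [aux_inner_eq]]
          simpa using hMz
      · have hMpos : (0:ℝ) < M := lt_of_le_of_ne hM0 (Ne.symm hMz)
        set u : A := (M⁻¹ : ℝ) • a i₀ with hu
        have hunorm : ‖u‖ = 1 := by
          rw [hu, norm_smul, Real.norm_of_nonneg (inv_nonneg.mpr hMpos.le), hi₀,
            inv_mul_cancel₀ hMpos.ne']
        set y : Fin (n+1) → A := fun i => if i = i₀ then u else 0 with hy
        have hsum : ∀ z : A, ∑ i, star (inner A (y i) z : A) * (inner A (y i) z : A)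
            = star (star u * z) * (star u * z) := by
          intro z
          rw [Finset.sum_eq_single i₀ (fun j _ hj => by simp [hy, hj, aux_inner_eq])
            (by simp)]
          simp [hy, aux_inner_eq]
        refine ⟨y, ?_, ?_⟩
        · unfold mustar
          refine csSup_le ⟨_, ⟨0, by simp, rfl⟩⟩ ?_
          rintro r ⟨z, hz, rfl⟩
          rw [hsum z, CStarRing.norm_star_mul_self, Real.sqrt_mul_self (norm_nonneg _)]
          calc ‖star u * z‖ ≤ ‖star u‖ * ‖z‖ := norm_mul_le _ _
            _ ≤ 1 * 1 := by
                rw [norm_star, hunorm]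
                exact mul_le_mul_of_nonneg_left hz zero_le_one
            _ = 1 := one_mul _
        · have hsum2 : ∑ i, star (inner A (y i) (a i) : A) * (inner A (y i) (a i) : A)
              = star (star u * a i₀) * (star u * a i₀) := by
            rw [Finset.sum_eq_single i₀ (fun j _ hj => by simp [hy, hj, aux_inner_eq])
              (by simp)]
            simp [hy, aux_inner_eq]
          rw [hsum2, CStarRing.norm_star_mul_self, Real.sqrt_mul_self (norm_nonneg _)]
          have he : star u * a i₀ = (M⁻¹ : ℝ) • (star (a i₀) * a i₀) := by
            rw [hu, star_smul, star_trivial, smul_mul_assoc]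
          rw [he, norm_smul, Real.norm_of_nonneg (inv_nonneg.mpr hMpos.le),
            CStarRing.norm_star_mul_self, hi₀]
          field_simp
    unfold starNorm
    exact le_antisymm (csSup_le ⟨M, hmem⟩ hub) (le_csSup ⟨M, hub⟩ hmem)
end

section
/- Let H be a complex Hilbert space and let H = H₁ ⊕ ⋯ ⊕ Hₙ be a direct sum decomposition into closed subspaces (every ξ ∈ H has a unique representation ξ = ξ₁ + ⋯ + ξₙ with ξᵢ ∈ Hᵢ). Then the following are equivalent: (i) Hᵢ ⟂ Hⱼ for all i ≠ j (⟨ξ,η⟩ = 0 for ξ ∈ Hᵢ, η ∈ Hⱼ); (ii) the decomposition is small with respect to the Hilbert multi-norm, i.e. ‖Q₁ξ₁ + ⋯ + Qₙξₙ‖ ≤ ‖(ξ₁,…,ξₙ)‖^H_n for all ξ₁,…,ξₙ ∈ H, where Qᵢ are the natural projections onto Hᵢ; (iii) the decomposition is orthogonal with respect to the Hilbert multi-norm, i.e. for all ξᵢ ∈ Hᵢ and every partition {S₁,…,S_m} of {1,…,n}, ‖(Σ_{i∈S₁}ξᵢ, …, Σ_{i∈S_m}ξᵢ)‖^H_m =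 ‖(ξ₁,…,ξₙ)‖^H_n; (iv) the decomposition is hermitian, i.e. ‖α₁ξ₁ + ⋯ + αₙξₙ‖ = ‖ξ₁ + ⋯ + ξₙ‖ for all ξᵢ ∈ Hᵢ and αᵢ ∈ ℂ with |αᵢ| = 1. -/
variable {H : Type*} [NormedAddCommGroup H] [InnerProductSpace ℂ H] [CompleteSpace H]

/-- An orthogonal projection on a Hilbert space: a bounded idempotent self-adjoint operator. -/
def IsOrthProjection (P : H →L[ℂ] H) : Prop :=
  (∀ v : H, P (P v) = P v) ∧ (∀ v w : H, (inner ℂ (P v) w : ℂ) = inner ℂ v (P w))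

/-- The Hilbert multi-norm `‖ξ‖^H_n`: the supremum of `‖P₁ξ₁ + ⋯ + Pₙξₙ‖` over all families
of mutually orthogonal orthogonal projections summing to the identity. -/
noncomputable def hilbertMultiNorm (n : ℕ) (ξ : Fin n → H) : ℝ :=
  sSup {r : ℝ | ∃ P : Fin n → H →L[ℂ] H, (∀ i, IsOrthProjection (P i)) ∧
    (∀ i j, i ≠ j → ∀ v, P i (P j v) = 0) ∧ (∀ v, ∑ i, P i v = v) ∧
    r = ‖∑ i, P i (ξ i)‖}

/-!
For `x ∈ Hᵢ`, `y ∈ Hⱼ` and `|c| = 1`, `‖x + c y‖² = ‖x‖² + 2 Re (c ⟪x, y⟫) + ‖y‖²`. Hence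
`⟪x, y⟫ = 0` as soon as `‖x + c y‖² ≤ ‖x‖² + ‖y‖²` for all such `c`, or as soon as `‖x + c y‖`
does not depend on `c`; the latter gives (iv) → (i).

For mutually orthogonal projections `Pᵢ`, Pythagoras gives `‖∑ Pᵢ ξᵢ‖² ≤ ∑ ‖ξᵢ‖²`, so
`‖ξ‖^H_n ≤ (∑ ‖ξᵢ‖²)^(1/2)`. As `Qᵢ` fixes `Hᵢ`, (ii) applied to `x` and `c y` placed in slots `i`
and `j` gives the former criterion, whence (ii) → (i). The bound is attained when the `ξᵢ` are
pairwise orthogonal (project onto the lines `ℂ ξᵢ`, one of them enlarged by the orthogonal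
complement of the others), so then `‖ξ‖^H_n = ‖∑ ξᵢ‖`. This gives (i) → (iii), and, through the
one-block partition and the invariance of the multi-norm under unimodular rescaling of the
entries, (iii) → (iv). Finally, when the `Hᵢ` are orthogonal the `Qᵢ` are the orthogonal
projections onto the `Hᵢ`, whence (i) → (ii).
-/

open scoped InnerProductSpace

variable {E : Type*} [NormedAddCommGroup E] [InnerProductSpace ℂ E]

theorem Complex.eq_zero_of_forall_re_mul_nonpos {t : ℂ}
    (h : ∀ c : ℂ, ‖c‖ = 1 → (c * t).re ≤ 0) : t = 0 := by
  have h₁ := h 1 (by simp)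
  have h₂ := h (-1) (by simp)
  have h₃ := h Complex.I (by simp)
  have h₄ := h (-Complex.I) (by simp)
  simp only [one_mul, neg_mul, Complex.neg_re, Complex.I_mul_re] at h₁ h₂ h₃ h₄
  apply Complex.ext <;> simp only [Complex.zero_re, Complex.zero_im] <;> linarith

theorem norm_add_smul_sq_of_norm_eq_one {c : ℂ} (hc : ‖c‖ = 1) (x y : E) :
    ‖x + c • y‖ ^ 2 = ‖x‖ ^ 2 + 2 * (c * ⟪x, y⟫_ℂ).re + ‖y‖ ^ 2 := by
  rw [norm_add_sq (𝕜 := ℂ), inner_smul_right, norm_smul, hc, one_mul]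
  rfl

theorem inner_eq_zero_of_forall_norm_add_smul_sq_le {x y : E}
    (h : ∀ c : ℂ, ‖c‖ = 1 → ‖x + c • y‖ ^ 2 ≤ ‖x‖ ^ 2 + ‖y‖ ^ 2) : ⟪x, y⟫_ℂ = 0 :=
  Complex.eq_zero_of_forall_re_mul_nonpos fun c hc => by
    have := h c hc
    rw [norm_add_smul_sq_of_norm_eq_one hc] at this
    linarith

theorem inner_eq_zero_of_forall_norm_add_smul_eq {x y : E}
    (h : ∀ c : ℂ, ‖c‖ = 1 → ‖x + c • y‖ = ‖x + y‖) : ⟪x, y⟫_ℂ = 0 :=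
  Complex.eq_zero_of_forall_re_mul_nonpos fun c hc => by
    have hc' : ‖-c‖ = 1 := by rwa [norm_neg]
    have h₁ := congrArg (· ^ 2) (h c hc)
    have h₂ := congrArg (· ^ 2) (h (-c) hc')
    simp only [norm_add_smul_sq_of_norm_eq_one hc, norm_add_smul_sq_of_norm_eq_one hc', neg_mul,
      Complex.neg_re] at h₁ h₂
    linarith

section Pythagoras

variable {ι : Type*} [Fintype ι] {v : ι → E}

theorem norm_sum_sq_of_pairwise_inner_eq_zero (h : Pairwise fun i j => ⟪v i, v j⟫_ℂ = 0) :
    ‖∑ i, v i‖ ^ 2 = ∑ i, ‖v i‖ ^ 2 := by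
  have hinner : ⟪∑ i, v i, ∑ i, v i⟫_ℂ = ∑ i, ⟪v i, v i⟫_ℂ := by
    simp only [sum_inner, inner_sum]
    exact Finset.sum_congr rfl fun i _ =>
      Finset.sum_eq_single_of_mem i (Finset.mem_univ i) fun j _ hji => h hji
  simp only [@norm_sq_eq_re_inner ℂ, hinner, map_sum]

theorem norm_sum_smul_of_pairwise_inner_eq_zero (h : Pairwise fun i j => ⟪v i, v j⟫_ℂ = 0)
    {α : ι → ℂ} (hα : ∀ i, ‖α i‖ = 1) : ‖∑ i, α i • v i‖ = ‖∑ i, v i‖ := by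
  have hαv : Pairwise fun i j => ⟪α i • v i, α j • v j⟫_ℂ = 0 := fun i j hij => by
    simp only [inner_smul_left, inner_smul_right, h hij, mul_zero]
  rw [← pow_left_inj₀ (norm_nonneg _) (norm_nonneg _) two_ne_zero,
    norm_sum_sq_of_pairwise_inner_eq_zero hαv, norm_sum_sq_of_pairwise_inner_eq_zero h]
  simp only [norm_smul, hα, one_mul]

end Pythagoras

theorem Fintype.sum_pi_single_add_pi_single {ι M N : Type*} [Fintype ι] [DecidableEq ι]
    [AddCommMonoid M] [AddCommMonoid N] {i j : ι} (hij : i ≠ j) (x y : M) (f : ι → M → N)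
    (hf : ∀ k, f k 0 = 0) :
    ∑ k, f k ((Pi.single i x + Pi.single j y : ι → M) k) = f i x + f j y := by
  rw [Fintype.sum_eq_add i j hij fun k hk => by simp [hk.1, hk.2, hf]]
  simp [hij, hij.symm]

section Subspaces

variable {ι : Type*} {Y : ι → Submodule ℂ E}

theorem pi_single_apply_mem [DecidableEq ι] {i : ι} {x : E} (hx : x ∈ Y i) (k : ι) :
    (Pi.single i x : ι → E) k ∈ Y k := by
  rcases eq_or_ne k i with rfl | hk
  · simpa using hx
  · simp [hk]

theorem pi_single_add_pi_single_apply_mem [DecidableEq ι] {i j : ι} {x y : E} (hx : x ∈ Y i)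
    (hy : y ∈ Y j) (k : ι) : (Pi.single i x + Pi.single j y : ι → E) k ∈ Y k :=
  (Y k).add_mem (pi_single_apply_mem hx k) (pi_single_apply_mem hy k)

variable [Fintype ι]

theorem pairwise_isOrtho_of_forall_norm_sum_sq_le
    (h : ∀ ξ : ι → E, (∀ i, ξ i ∈ Y i) → ‖∑ i, ξ i‖ ^ 2 ≤ ∑ i, ‖ξ i‖ ^ 2) :
    Pairwise fun i j => Y i ⟂ Y j := by
  classical
  refine fun i j hij => Submodule.isOrtho_iff_inner_eq.2 fun x hx y hy =>
    inner_eq_zero_of_forall_norm_add_smul_sq_le fun c hc => ?_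
  have := h _ (pi_single_add_pi_single_apply_mem hx ((Y j).smul_mem c hy))
  rwa [Fintype.sum_pi_single_add_pi_single hij _ _ (fun _ v => v) fun _ => rfl,
    Fintype.sum_pi_single_add_pi_single hij _ _ (fun _ v => ‖v‖ ^ 2) (by simp),
    norm_smul, hc, one_mul] at this

theorem pairwise_isOrtho_of_forall_norm_sum_smul_eq
    (h : ∀ α : ι → ℂ, (∀ i, ‖α i‖ = 1) → ∀ ξ : ι → E, (∀ i, ξ i ∈ Y i) →
      ‖∑ i, α i • ξ i‖ = ‖∑ i, ξ i‖) :
    Pairwise fun i j => Y i ⟂ Y j := by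
  classical
  refine fun i j hij => Submodule.isOrtho_iff_inner_eq.2 fun x hx y hy =>
    inner_eq_zero_of_forall_norm_add_smul_eq fun c hc => ?_
  set α := Function.update (1 : ι → ℂ) j c
  have hα : ∀ k, ‖α k‖ = 1 := fun k => by
    rcases eq_or_ne k j with rfl | hk <;> simp [α, *]
  have := h α hα _ (pi_single_add_pi_single_apply_mem hx hy)
  rw [Fintype.sum_pi_single_add_pi_single hij _ _ (fun k v => α k • v) (by simp),
    Fintype.sum_pi_single_add_pi_single hij _ _ (fun _ v => v) fun _ => rfl] at this
  simpa [α, hij] using this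

theorem apply_eq_self_of_existsUnique_sum
    (huniq : ∀ v : E, ∃! f : ι → E, (∀ i, f i ∈ Y i) ∧ ∑ i, f i = v)
    {Q : ι → E → E} (hQmem : ∀ v : E, ∀ i, Q i v ∈ Y i) (hQsum : ∀ v : E, ∑ i, Q i v = v)
    {i : ι} {x : E} (hx : x ∈ Y i) : Q i x = x := by
  classical
  have hsingle : (∀ k, (Pi.single i x : ι → E) k ∈ Y k) ∧ ∑ k, (Pi.single i x : ι → E) k = x :=
    ⟨pi_single_apply_mem hx, by simp⟩
  simpa using congrFun ((huniq x).unique ⟨hQmem x, hQsum x⟩ hsingle) i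

theorem starProjection_sum_of_mem (hY : Pairwise fun i j => Y i ⟂ Y j) {w : ι → E}
    (hw : ∀ i, w i ∈ Y i) (i : ι) [(Y i).HasOrthogonalProjection] :
    (Y i).starProjection (∑ j, w j) = w i := by
  rw [map_sum, Finset.sum_eq_single_of_mem i (Finset.mem_univ i) fun j _ hji =>
    (Y i).starProjection_apply_eq_zero_iff.2 ((hY hji).le (hw j))]
  exact (Y i).starProjection_eq_self_iff.2 (hw i)

end Subspaces

section MultiNorm

variable {n : ℕ}

def IsResolutionOfIdentity (P : Fin n → E →L[ℂ] E) : Prop :=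
  (∀ i, IsOrthProjection (P i)) ∧ (∀ i j, i ≠ j → ∀ v, P i (P j v) = 0) ∧ ∀ v, ∑ i, P i v = v

theorem hilbertMultiNorm_eq_sSup_image (ξ : Fin n → E) :
    hilbertMultiNorm n ξ =
      sSup ((fun P => ‖∑ i, P i (ξ i)‖) '' {P | IsResolutionOfIdentity P}) := by
  simp only [hilbertMultiNorm, IsResolutionOfIdentity, Set.image, Set.mem_ofPred_eq, and_assoc,
    eq_comm]

theorem IsOrthProjection.norm_apply_le {P : E →L[ℂ] E} (hP : IsOrthProjection P) (v : E) :
    ‖P v‖ ≤ ‖v‖ := by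
  have h : ‖P v‖ ^ 2 ≤ ‖v‖ * ‖P v‖ :=
    calc ‖P v‖ ^ 2 = RCLike.re ⟪v, P v⟫_ℂ := by rw [@norm_sq_eq_re_inner ℂ, hP.2, hP.1]
      _ ≤ ‖v‖ * ‖P v‖ := re_inner_le_norm _ _
  nlinarith [norm_nonneg (P v), norm_nonneg v]

namespace IsResolutionOfIdentity

variable {P : Fin n → E →L[ℂ] E} (hP : IsResolutionOfIdentity P)
include hP

theorem inner_apply_apply_eq_zero {i j : Fin n} (hij : i ≠ j) (v w : E) :
    ⟪P i v, P j w⟫_ℂ = 0 := by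
  rw [(hP.1 i).2, hP.2.1 i j hij, inner_zero_right]

theorem norm_sum_apply_le_sqrt (ξ : Fin n → E) : ‖∑ i, P i (ξ i)‖ ≤ √(∑ i, ‖ξ i‖ ^ 2) := by
  rw [Real.le_sqrt (norm_nonneg _) (by positivity),
    norm_sum_sq_of_pairwise_inner_eq_zero fun i j hij => hP.inner_apply_apply_eq_zero hij _ _]
  gcongr with i
  exact (hP.1 i).norm_apply_le _

theorem norm_sum_apply_le_hilbertMultiNorm (ξ : Fin n → E) :
    ‖∑ i, P i (ξ i)‖ ≤ hilbertMultiNorm n ξ := by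
  rw [hilbertMultiNorm_eq_sSup_image]
  exact le_csSup ⟨_, Set.forall_mem_image.2 fun _ hQ => hQ.norm_sum_apply_le_sqrt ξ⟩
    (Set.mem_image_of_mem _ hP)

end IsResolutionOfIdentity

theorem hilbertMultiNorm_nonneg (ξ : Fin n → E) : 0 ≤ hilbertMultiNorm n ξ := by
  rw [hilbertMultiNorm_eq_sSup_image]
  exact Real.sSup_nonneg (Set.forall_mem_image.2 fun _ _ => norm_nonneg _)

theorem hilbertMultiNorm_le_sqrt (ξ : Fin n → E) : hilbertMultiNorm n ξ ≤ √(∑ i, ‖ξ i‖ ^ 2) := by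
  rw [hilbertMultiNorm_eq_sSup_image]
  exact Real.sSup_le (Set.forall_mem_image.2 fun _ hP => hP.norm_sum_apply_le_sqrt ξ)
    (Real.sqrt_nonneg _)

theorem hilbertMultiNorm_smul {α : Fin n → ℂ} (hα : ∀ i, ‖α i‖ = 1) (ξ : Fin n → E) :
    hilbertMultiNorm n (fun i => α i • ξ i) = hilbertMultiNorm n ξ := by
  simp only [hilbertMultiNorm_eq_sSup_image, map_smul]
  congr 1
  exact Set.image_congr fun P hP => norm_sum_smul_of_pairwise_inner_eq_zero
    (fun i j hij => hP.inner_apply_apply_eq_zero hij _ _) hα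

theorem isResolutionOfIdentity_starProjection {K : Fin n → Submodule ℂ E}
    [∀ i, (K i).HasOrthogonalProjection] (hK : Pairwise fun i j => K i ⟂ K j)
    (htop : ⨆ i, K i = ⊤) : IsResolutionOfIdentity fun i => (K i).starProjection := by
  refine ⟨fun i => ⟨fun v => ?_, (K i).inner_starProjection_left_eq_right⟩,
    fun i j hij v => ?_, fun v => ?_⟩
  · exact (K i).starProjection_eq_self_iff.2 ((K i).starProjection_apply_mem v)
  · exact (K i).starProjection_apply_eq_zero_iff.2
      ((hK hij).symm.le ((K j).starProjection_apply_mem v))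
  · obtain ⟨w, hw, rfl⟩ :=
      (Submodule.mem_iSup_iff_exists_finsupp K v).1 (htop ▸ Submodule.mem_top)
    rw [Finsupp.sum_fintype _ _ fun _ => rfl]
    exact Finset.sum_congr rfl fun i _ => starProjection_sum_of_mem hK hw i

theorem exists_isResolutionOfIdentity_of_finiteDimensional {K : Fin n → Submodule ℂ E}
    [∀ i, FiniteDimensional ℂ (K i)] (hK : Pairwise fun i j => K i ⟂ K j) (i₀ : Fin n) :
    ∃ P, IsResolutionOfIdentity P ∧ ∀ i, ∀ x ∈ K i, P i x = x := by
  classical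
  set W := ⨆ (i) (_ : i ≠ i₀), K i
  -- Enlarging `K i₀` by the orthogonal complement of the other `K i` makes the family span `E`.
  set K' := Function.update K i₀ Wᗮ with hK'
  have : ∀ i, (K' i).HasOrthogonalProjection := fun i => by
    rw [hK', Function.update_apply]
    split_ifs <;> infer_instance
  have hle : ∀ i, K i ≤ K' i := fun i => by
    rw [hK', Function.update_apply]
    split_ifs with hi
    · subst hi
      exact Submodule.isOrtho_iSup_right.2 fun j =>
        Submodule.isOrtho_iSup_right.2 fun hj => hK hj.symm
    · rfl
  have hK'orth : Pairwise fun i j => K' i ⟂ K' j := fun i j hij => by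
    simp only [hK', Function.update_apply]
    split_ifs with hi hj hj
    · exact absurd (hi.trans hj.symm) hij
    · exact (Submodule.isOrtho_orthogonal_left W).mono_right (le_biSup K hj)
    · exact (Submodule.isOrtho_orthogonal_right W).mono_left (le_biSup K hi)
    · exact hK hij
  have htop : ⨆ i, K' i = ⊤ := by
    rw [iSup_split_single K' i₀, hK', Function.update_self, sup_comm]
    convert Submodule.sup_orthogonal_of_hasOrthogonalProjection (K := W) using 2
    exact iSup_congr fun i => iSup_congr fun hi => Function.update_of_ne hi _ _
  exact ⟨_, isResolutionOfIdentity_starProjection hK'orth htop,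
    fun i x hx => (K' i).starProjection_eq_self_iff.2 (hle i hx)⟩

theorem hilbertMultiNorm_eq_norm_sum_of_pairwise_inner_eq_zero {ξ : Fin n → E}
    (h : Pairwise fun i j => ⟪ξ i, ξ j⟫_ℂ = 0) : hilbertMultiNorm n ξ = ‖∑ i, ξ i‖ := by
  refine le_antisymm ?_ ?_
  · rw [← Real.sqrt_sq (norm_nonneg _), norm_sum_sq_of_pairwise_inner_eq_zero h]
    exact hilbertMultiNorm_le_sqrt ξ
  rcases isEmpty_or_nonempty (Fin n) with _ | ⟨⟨i₀⟩⟩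
  · simpa using hilbertMultiNorm_nonneg ξ
  have hspan : Pairwise fun i j => (ℂ ∙ ξ i) ⟂ (ℂ ∙ ξ j) := fun i j hij =>
    Submodule.isOrtho_span.2 <| by rintro _ rfl _ rfl; exact h hij
  obtain ⟨P, hP, hPξ⟩ := exists_isResolutionOfIdentity_of_finiteDimensional hspan i₀
  calc ‖∑ i, ξ i‖ = ‖∑ i, P i (ξ i)‖ := by
        simp only [hPξ _ _ (Submodule.mem_span_singleton_self _)]
    _ ≤ hilbertMultiNorm n ξ := hP.norm_sum_apply_le_hilbertMultiNorm ξ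

theorem hilbertMultiNorm_one (v : E) : hilbertMultiNorm 1 (fun _ => v) = ‖v‖ := by
  simpa using hilbertMultiNorm_eq_norm_sum_of_pairwise_inner_eq_zero
    (ξ := fun _ : Fin 1 => v) Subsingleton.pairwise

theorem Finset.sum_sum_of_existsUnique_mem {ι κ M : Type*} [Fintype ι] [Fintype κ]
    [DecidableEq ι] [AddCommMonoid M] {S : κ → Finset ι} (hS : ∀ i, ∃! j, i ∈ S j)
    (f : ι → M) : ∑ j, ∑ i ∈ S j, f i = ∑ i, f i := by
  rw [← Finset.sum_biUnion fun j _ k _ hjk =>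
    Finset.disjoint_left.2 fun i hj hk => hjk ((hS i).unique hj hk)]
  congr 1
  exact Finset.eq_univ_of_forall fun i => Finset.mem_biUnion.2
    ⟨_, Finset.mem_univ _, (hS i).exists.choose_spec⟩

theorem hilbertMultiNorm_sum_of_existsUnique_mem {m : ℕ} {ξ : Fin n → E}
    (h : Pairwise fun i j => ⟪ξ i, ξ j⟫_ℂ = 0) {S : Fin m → Finset (Fin n)}
    (hS : ∀ i, ∃! j, i ∈ S j) :
    hilbertMultiNorm m (fun j => ∑ i ∈ S j, ξ i) = hilbertMultiNorm n ξ := by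
  classical
  have hblocks : Pairwise fun j k => ⟪∑ a ∈ S j, ξ a, ∑ b ∈ S k, ξ b⟫_ℂ = 0 := fun j k hjk => by
    simp only [sum_inner, inner_sum]
    exact Finset.sum_eq_zero fun b hb => Finset.sum_eq_zero fun a ha =>
      h fun hab => hjk ((hS a).unique ha (hab ▸ hb))
  rw [hilbertMultiNorm_eq_norm_sum_of_pairwise_inner_eq_zero hblocks,
    hilbertMultiNorm_eq_norm_sum_of_pairwise_inner_eq_zero h,
    Finset.sum_sum_of_existsUnique_mem hS]

variable {Y : Fin n → Submodule ℂ E}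

theorem norm_sum_apply_le_hilbertMultiNorm_of_pairwise_isOrtho [CompleteSpace E]
    (hclosed : ∀ i, IsClosed (Y i : Set E)) (hY : Pairwise fun i j => Y i ⟂ Y j)
    {Q : Fin n → E → E} (hQmem : ∀ v : E, ∀ i, Q i v ∈ Y i) (hQsum : ∀ v : E, ∑ i, Q i v = v)
    (ξ : Fin n → E) : ‖∑ i, Q i (ξ i)‖ ≤ hilbertMultiNorm n ξ := by
  have := fun i => (hclosed i).completeSpace_coe
  have hPQ : ∀ i v, (Y i).starProjection v = Q i v := fun i v => by
    conv_lhs => rw [← hQsum v]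
    exact starProjection_sum_of_mem hY (hQmem v) i
  have htop : ⨆ i, Y i = ⊤ :=
    eq_top_iff.2 fun v _ => hQsum v ▸ Submodule.sum_mem_iSup (hQmem v)
  simpa only [hPQ] using
    (isResolutionOfIdentity_starProjection hY htop).norm_sum_apply_le_hilbertMultiNorm ξ

theorem norm_sum_smul_eq_of_forall_hilbertMultiNorm_eq
    (h : ∀ ξ : Fin n → E, (∀ i, ξ i ∈ Y i) → hilbertMultiNorm n ξ = ‖∑ i, ξ i‖)
    {α : Fin n → ℂ} (hα : ∀ i, ‖α i‖ = 1) {ξ : Fin n → E} (hξ : ∀ i, ξ i ∈ Y i) :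
    ‖∑ i, α i • ξ i‖ = ‖∑ i, ξ i‖ := by
  rw [← h _ fun i => (Y i).smul_mem _ (hξ i), hilbertMultiNorm_smul hα, h ξ hξ]

end MultiNorm

/-- For a direct sum decomposition `H = H₁ ⊕ ⋯ ⊕ Hₙ` of a Hilbert space into closed subspaces,
the following are equivalent: (i) the subspaces are pairwise orthogonal; (ii) the decomposition
is small with respect to the Hilbert multi-norm; (iii) the decomposition is orthogonal with
respect to the Hilbert multi-norm; (iv) the decomposition is hermitian. -/
theorem hilbert_decomposition_tfae
    (n : ℕ) (Y : Fin n → Submodule ℂ H)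
    (hclosed : ∀ i, IsClosed (Y i : Set H))
    (huniq : ∀ v : H, ∃! f : Fin n → H, (∀ i, f i ∈ Y i) ∧ ∑ i, f i = v)
    (Q : Fin n → H → H)
    (hQmem : ∀ v : H, ∀ i, Q i v ∈ Y i)
    (hQsum : ∀ v : H, ∑ i, Q i v = v) :
    -- (i) ↔ (ii)
    ((∀ i j, i ≠ j → ∀ x ∈ Y i, ∀ y ∈ Y j, (inner ℂ x y : ℂ) = 0) ↔
      (∀ ξ : Fin n → H, ‖∑ i, Q i (ξ i)‖ ≤ hilbertMultiNorm n ξ)) ∧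
    -- (i) ↔ (iii)
    ((∀ i j, i ≠ j → ∀ x ∈ Y i, ∀ y ∈ Y j, (inner ℂ x y : ℂ) = 0) ↔
      (∀ ξ : Fin n → H, (∀ i, ξ i ∈ Y i) →
        ∀ (m : ℕ) (S : Fin m → Finset (Fin n)), (∀ i, ∃! j, i ∈ S j) →
          hilbertMultiNorm m (fun j => ∑ i ∈ S j, ξ i) = hilbertMultiNorm n ξ)) ∧
    -- (i) ↔ (iv)
    ((∀ i j, i ≠ j → ∀ x ∈ Y i, ∀ y ∈ Y j, (inner ℂ x y : ℂ) = 0) ↔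
      (∀ (α : Fin n → ℂ), (∀ i, ‖α i‖ = 1) → ∀ ξ : Fin n → H, (∀ i, ξ i ∈ Y i) →
        ‖∑ i, α i • ξ i‖ = ‖∑ i, ξ i‖)) := by
  have hortho : (∀ i j, i ≠ j → ∀ x ∈ Y i, ∀ y ∈ Y j, ⟪x, y⟫_ℂ = 0) ↔
      Pairwise fun i j => Y i ⟂ Y j := by
    simp only [Pairwise, Submodule.isOrtho_iff_inner_eq]
  have hinner : Pairwise (fun i j => Y i ⟂ Y j) → ∀ ξ : Fin n → H, (∀ i, ξ i ∈ Y i) →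
      Pairwise fun i j => ⟪ξ i, ξ j⟫_ℂ = 0 :=
    fun hY ξ hξ i j hij => (hY hij).inner_eq (hξ i) (hξ j)
  rw [hortho]
  refine ⟨⟨fun hY => norm_sum_apply_le_hilbertMultiNorm_of_pairwise_isOrtho hclosed hY hQmem hQsum,
      fun h => pairwise_isOrtho_of_forall_norm_sum_sq_le fun ξ hξ => ?ii_i⟩,
    ⟨fun hY ξ hξ _ _ hS => hilbertMultiNorm_sum_of_existsUnique_mem (hinner hY ξ hξ) hS,
      fun h => pairwise_isOrtho_of_forall_norm_sum_smul_eq fun α hα ξ hξ =>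
        norm_sum_smul_eq_of_forall_hilbertMultiNorm_eq (fun ξ hξ => ?iii_iv) hα hξ⟩,
    ⟨fun hY α hα ξ hξ => norm_sum_smul_of_pairwise_inner_eq_zero (hinner hY ξ hξ) hα,
      pairwise_isOrtho_of_forall_norm_sum_smul_eq⟩⟩
  case ii_i =>
    have hQξ : ∑ i, Q i (ξ i) = ∑ i, ξ i := Finset.sum_congr rfl fun i _ =>
      apply_eq_self_of_existsUnique_sum huniq hQmem hQsum (hξ i)
    rw [← Real.le_sqrt (norm_nonneg _) (by positivity), ← hQξ]
    exact (h ξ).trans (hilbertMultiNorm_le_sqrt ξ)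
  case iii_iv =>
    have hpart : ∀ i : Fin n, ∃! j : Fin 1, i ∈ Finset.univ :=
      fun i => ⟨0, Finset.mem_univ i, fun j _ => Subsingleton.elim j 0⟩
    rw [← h ξ hξ 1 (fun _ => Finset.univ) hpart, hilbertMultiNorm_one]
end
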